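/- arXiv:2504.20878 — 9 statements merged into one kernel-verified Lean document; each statement's English description precedes it below -/
import Mathlib

section
/- Suppose $L\colon C([a,b]) \to C([a,b])$ is a positive bounded linear operator (i.e., $f \ge 0$ pointwise implies $Lf \ge 0$ pointwise). If $w \in C([a,b])$ is strictly positive and $\alpha w \le Lw \le \beta w$ pointwise for reals $\alpha,\beta$, then the spectral radius $r(L)$ satisfies $\alpha \le r(L) \le \beta$. -/
set_option synthInstance.maxHeartbeats 1000000
open Filter Topology
namespace Stmt2Aux

variable {K : Type*} [TopologicalSpace K] [CompactSpace K]

abbrev En (K : Type*) [TopologicalSpace K] [CompactSpace K] := C(K, ℝ) →L[ℝ] C(K, ℝ)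

def Pos (T : En K) : Prop :=
  ∀ f : C(K, ℝ), (∀ x, 0 ≤ f x) → ∀ x, 0 ≤ T f x

lemma Pos.sum {ι : Type*} {s : Finset ι} {T : ι → En K}
    (h : ∀ i ∈ s, Pos (T i)) : Pos (∑ i ∈ s, T i) := by
  intro f hf x
  rw [ContinuousLinearMap.sum_apply, ContinuousMap.sum_apply]
  exact Finset.sum_nonneg fun i hi => h i hi f hf x

lemma continuous_eval (f : C(K, ℝ)) (x : K) :
    Continuous (fun T : En K => T f x) :=
  ((ContinuousMap.evalCLM ℝ x).continuous).comp
    (ContinuousLinearMap.apply ℝ (C(K, ℝ)) f).continuous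

lemma Pos.of_tendsto {ι : Type*} {l : Filter ι} [l.NeBot] {T : ι → En K}
    {S : En K} (h : Tendsto T l (𝓝 S)) (hpos : ∀ᶠ i in l, Pos (T i)) : Pos S := by
  intro f hf x
  exact ge_of_tendsto (((continuous_eval f x).tendsto S).comp h)
    (hpos.mono fun i hi => hi f hf x)

lemma Pos.mul {S T : En K} (hS : Pos S) (hT : Pos T) : Pos (S * T) := by
  intro f hf x
  rw [ContinuousLinearMap.mul_apply]
  exact hS _ (fun y => hT f hf y) x

lemma Pos.smul {T : En K} (hT : Pos T) {c : ℝ} (hc : 0 ≤ c) : Pos (c • T) := by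
  intro f hf x
  rw [ContinuousLinearMap.smul_apply]
  simp only [ContinuousMap.smul_apply, smul_eq_mul]
  exact mul_nonneg hc (hT f hf x)

lemma Pos.pow {T : En K} (hT : Pos T) (n : ℕ) : Pos (T ^ n) := by
  induction n with
  | zero => intro f hf x; rw [pow_zero, ContinuousLinearMap.one_apply]; exact hf x
  | succ n ih =>
      intro f hf x
      rw [pow_succ, ContinuousLinearMap.mul_apply]
      exact ih _ (fun y => hT f hf y) x

lemma inverse_unique' {R : Type*} [Ring R] {a b : R} (h1 : a * b = 1) (h2 : b * a = 1) :
    Ring.inverse a = b := by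
  have hu : IsUnit a := ⟨⟨a, b, h1, h2⟩, rfl⟩
  calc Ring.inverse a = Ring.inverse a * (a * b) := by rw [h1, mul_one]
    _ = (Ring.inverse a * a) * b := by rw [mul_assoc]
    _ = b := by rw [Ring.inverse_mul_cancel _ hu, one_mul]

lemma pos_inverse_one_sub {T : En K} (hT : Pos T) (h : ‖T‖ < 1) :
    Pos (Ring.inverse (1 - T)) := by
  have hsum := hasSum_geom_series_inverse T h
  exact Pos.of_tendsto hsum (Eventually.of_forall fun s => Pos.sum fun i _ => hT.pow i)

lemma smul_mul (c : ℝ) (B C : En K) : (c • B) * C = c • (B * C) := by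
  exact ContinuousLinearMap.smul_comp c B C

lemma mul_smul' (c : ℝ) (B C : En K) : B * (c • C) = c • (B * C) := by
  exact ContinuousLinearMap.comp_smul B c C

lemma isUnit_one_sub {T : En K} (h : ‖T‖ < 1) : IsUnit (1 - T) :=
  isUnit_one_sub_of_norm_lt_one (R := En K) h

/-- For `s > ‖L‖`, the resolvent is positive (Neumann series). -/
lemma pos_inverse_large {L : En K} (hL : Pos L) {s : ℝ} (hs : ‖L‖ < s) :
    Pos (Ring.inverse (s • (1 : En K) - L)) := by
  have hs0 : 0 < s := lt_of_le_of_lt (norm_nonneg L) hs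
  set x : En K := s⁻¹ • L with hx
  have hxnorm : ‖x‖ < 1 := by
    refine lt_of_le_of_lt (ContinuousLinearMap.opNorm_smul_le s⁻¹ L) ?_
    rw [Real.norm_eq_abs, abs_inv, abs_of_pos hs0]
    rw [← div_eq_inv_mul, div_lt_one hs0]
    exact hs
  have hfact : s • (1 : En K) - L = s • (1 - x) := by
    rw [smul_sub, hx, smul_smul, mul_inv_cancel₀ hs0.ne', one_smul]
  have hxpos : Pos x := hL.smul (inv_nonneg.mpr hs0.le)
  have hup : IsUnit (1 - x) := isUnit_one_sub hxnorm
  have hinv : Ring.inverse (s • (1 : En K) - L) = s⁻¹ • Ring.inverse (1 - x) := by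
    rw [hfact]
    apply inverse_unique'
    · rw [smul_mul, mul_smul', smul_smul, mul_inv_cancel₀ hs0.ne', one_smul,
        Ring.mul_inverse_cancel _ hup]
    · rw [smul_mul, mul_smul', smul_smul, inv_mul_cancel₀ hs0.ne', one_smul,
        Ring.inverse_mul_cancel _ hup]
  rw [hinv]
  exact (pos_inverse_one_sub hxpos hxnorm).smul (inv_nonneg.mpr hs0.le)

/-- If `s • 1 - L` is invertible for all `s ≥ t`, then the resolvent at `t` is positive. -/
lemma pos_inverse_of_forall_isUnit {L : En K} (hL : Pos L) {t : ℝ}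
    (hu : ∀ s : ℝ, t ≤ s → IsUnit (s • (1 : En K) - L)) :
    Pos (Ring.inverse (t • (1 : En K) - L)) := by
  classical
  set M : ℝ := max t (‖L‖ + 1) with hM
  set g : ℝ → En K := fun s => Ring.inverse (s • (1 : En K) - L) with hg
  set T : Set ℝ := {s : ℝ | s ∈ Set.Icc t M ∧ Pos (g s)} with hT
  have hMT : M ∈ T := by
    refine ⟨⟨le_max_left _ _, le_refl _⟩, ?_⟩
    have h1 : ‖L‖ < M := lt_of_lt_of_le (by linarith [norm_nonneg L]) (le_max_right t (‖L‖ + 1))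
    exact pos_inverse_large hL h1
  have hne : T.Nonempty := ⟨M, hMT⟩
  have hbdd : BddBelow T := ⟨t, fun s hs => hs.1.1⟩
  have hclosed : IsClosed T := by
    rw [← closure_subset_iff_isClosed]
    intro s hs
    have hsub : T ⊆ Set.Icc t M := fun r hr => hr.1
    have hsIcc : s ∈ Set.Icc t M := isClosed_Icc.closure_subset ((closure_mono hsub) hs)
    have hus : IsUnit (s • (1 : En K) - L) := hu s hsIcc.1
    have hcont : ContinuousAt g s := by
      have h1 : Continuous (fun r : ℝ => r • (1 : En K) - L) :=
        (continuous_id.smul continuous_const).sub continuous_const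
      have h2 : ContinuousAt Ring.inverse (s • (1 : En K) - L) := by
        have := NormedRing.inverse_continuousAt (R := En K) hus.unit
        rwa [hus.unit_spec] at this
      have h1' : ContinuousAt (fun r : ℝ => r • (1 : En K) - L) s := h1.continuousAt
      exact ContinuousAt.comp (x := s) h2 h1'
    refine ⟨hsIcc, ?_⟩
    intro f hf x
    have hnb : (𝓝[T] s).NeBot := mem_closure_iff_nhdsWithin_neBot.mp hs
    have htend : Tendsto (fun r => g r f x) (𝓝[T] s) (𝓝 (g s f x)) :=
      ((continuous_eval f x).tendsto _).comp (hcont.continuousWithinAt)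
    refine ge_of_tendsto htend ?_
    filter_upwards [self_mem_nhdsWithin] with r hr
    exact hr.2 f hf x
  set c : ℝ := sInf T with hc
  have hcT : c ∈ T := hclosed.csInf_mem hne hbdd
  rcases eq_or_lt_of_le hcT.1.1 with heq | hlt
  · rw [← heq] at hcT
    exact hcT.2
  · exfalso
    set ε : ℝ := (2 * (‖g c‖ + 1))⁻¹ with hε
    have hgc : (0:ℝ) ≤ ‖g c‖ := norm_nonneg (g c)
    have hεpos : 0 < ε := by positivity
    set s : ℝ := max t (c - ε) with hsdef
    have hst : t ≤ s := le_max_left _ _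
    have hsc : s < c := max_lt hlt (by linarith)
    have hcsε : c - s ≤ ε := by
      have : c - ε ≤ s := le_max_right _ _
      linarith
    have hcs0 : (0:ℝ) ≤ c - s := by linarith
    set y : En K := (c - s) • g c with hy
    have hypos : Pos y := hcT.2.smul hcs0
    have hynorm : ‖y‖ < 1 := by
      refine lt_of_le_of_lt (ContinuousLinearMap.opNorm_smul_le (c - s) (g c)) ?_
      rw [Real.norm_eq_abs, abs_of_nonneg hcs0]
      have h1 : (c - s) * ‖g c‖ ≤ ε * (‖g c‖ + 1) := by nlinarith
      have h2 : ε * (‖g c‖ + 1) = 1 / 2 := by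
        rw [hε]; field_simp
      linarith
    have huc : IsUnit (c • (1 : En K) - L) := hu c hcT.1.1
    have hgcinv : (c • (1 : En K) - L) * g c = 1 := Ring.mul_inverse_cancel _ huc
    have hgcinv' : g c * (c • (1 : En K) - L) = 1 := Ring.inverse_mul_cancel _ huc
    have hfact : s • (1 : En K) - L = (c • (1 : En K) - L) * (1 - y) := by
      rw [mul_sub, mul_one, hy, mul_smul', hgcinv]
      module
    have huy : IsUnit (1 - y) := isUnit_one_sub hynorm
    have hgs : g s = Ring.inverse (1 - y) * g c := by
      rw [hg]
      simp only
      rw [hfact]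
      apply inverse_unique'
      · rw [← mul_assoc, mul_assoc (c • (1 : En K) - L), Ring.mul_inverse_cancel _ huy, mul_one,
          hgcinv]
      · rw [mul_assoc, ← mul_assoc (g c), hgcinv', one_mul, Ring.inverse_mul_cancel _ huy]
    have hsT : s ∈ T := by
      refine ⟨⟨hst, le_trans hsc.le hcT.1.2⟩, ?_⟩
      rw [hgs]
      exact (pos_inverse_one_sub hypos hynorm).mul hcT.2
    have hle := csInf_le hbdd hsT
    rw [← hc] at hle
    linarith


lemma Pos.mono {T : En K} (hT : Pos T) {f g : C(K, ℝ)} (h : ∀ x, f x ≤ g x) :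
    ∀ x, T f x ≤ T g x := by
  intro x
  have h0 : ∀ y, 0 ≤ (g - f) y := by
    intro y; simp only [ContinuousMap.sub_apply]; linarith [h y]
  have := hT (g - f) h0 x
  rw [map_sub] at this
  simp only [ContinuousMap.sub_apply] at this
  linarith

lemma lower_aux [Nonempty K] {L : En K} (hL : Pos L) (w : C(K, ℝ)) (hw : ∀ x, 0 < w x)
    {α t : ℝ} (hαw : ∀ x, α * w x ≤ L w x) (ht2 : t < α)
    (hu : ∀ s : ℝ, t ≤ s → IsUnit (s • (1 : En K) - L)) : False := by
  obtain ⟨x0⟩ := ‹Nonempty K›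
  have hSpos : Pos (Ring.inverse (t • (1 : En K) - L)) :=
    pos_inverse_of_forall_isUnit hL hu
  set S := Ring.inverse (t • (1 : En K) - L) with hS
  have hSmul : S * (t • (1 : En K) - L) = 1 :=
    Ring.inverse_mul_cancel _ (hu t le_rfl)
  set h0 : C(K, ℝ) := (t • (1 : En K) - L) w with hh0
  have hval : ∀ x, h0 x = t * w x - L w x := by
    intro x
    rw [hh0]
    simp [ContinuousLinearMap.sub_apply, ContinuousLinearMap.smul_apply,
      ContinuousLinearMap.one_apply]
  have hneg : ∀ x, 0 ≤ (-h0) x := by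
    intro x
    have h1 := hαw x
    have h2 : t * w x < α * w x := mul_lt_mul_of_pos_right ht2 (hw x)
    simp only [ContinuousMap.neg_apply]
    rw [hval x]
    linarith
  have hSh : S h0 = w := by
    have := congrArg (fun U : En K => U w) hSmul
    simpa [ContinuousLinearMap.mul_apply, ContinuousLinearMap.one_apply, ← hh0] using this
  have hfin := hSpos (-h0) hneg x0
  rw [map_neg, hSh] at hfin
  simp only [ContinuousMap.neg_apply] at hfin
  linarith [hw x0]

end Stmt2Aux

open Stmt2Aux Filter ENNReal NNReal

theorem stmt_2 (a b : ℝ) (hab : a < b)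
    (L : C(Set.Icc a b, ℝ) →L[ℝ] C(Set.Icc a b, ℝ))
    (hLpos : ∀ f : C(Set.Icc a b, ℝ), (∀ x, 0 ≤ f x) → ∀ x, 0 ≤ (L f) x)
    (w : C(Set.Icc a b, ℝ)) (hw : ∀ x, 0 < w x)
    (α β : ℝ)
    (hαw : ∀ x, α * w x ≤ (L w) x) (hwβ : ∀ x, (L w) x ≤ β * w x) :
    ENNReal.ofReal α ≤ spectralRadius ℝ L ∧ spectralRadius ℝ L ≤ ENNReal.ofReal β := by
  haveI : Nonempty (Set.Icc a b) := Set.nonempty_Icc_subtype hab.le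
  have hL : Pos L := hLpos
  obtain ⟨x0, -, hx0⟩ := isCompact_univ.exists_isMinOn (Set.univ_nonempty)
    w.continuous.continuousOn
  have hx0' : ∀ x, w x0 ≤ w x := fun x => hx0 (Set.mem_univ x)
  set m : ℝ := w x0 with hm
  have hm0 : 0 < m := hw x0
  have hwnorm : ∀ x, w x ≤ ‖w‖ := fun x =>
    (le_abs_self _).trans (by simpa [Real.norm_eq_abs] using w.norm_coe_le_norm x)
  have hβ0 : 0 ≤ β := by
    have h1 : 0 ≤ L w x0 := hLpos w (fun x => (hw x).le) x0
    have h2 := hwβ x0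
    nlinarith [hw x0]
  -- iterates of `L` on `w`
  have hLkw : ∀ k : ℕ, ∀ x, ((L ^ k) w) x ≤ β ^ k * w x := by
    intro k
    induction k with
    | zero => intro x; simp [ContinuousLinearMap.one_apply]
    | succ k ih =>
        intro x
        have h1 : ((L ^ (k+1)) w) x = ((L ^ k) (L w)) x := by
          rw [pow_succ, ContinuousLinearMap.mul_apply]
        have h3 : ((L ^ k) (L w)) x ≤ ((L ^ k) (β • w)) x := by
          refine (hL.pow k).mono (fun y => ?_) x
          simpa using hwβ y
        have h4 : ((L ^ k) (β • w)) x = β * ((L ^ k) w) x := by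
          rw [map_smul]; simp
        have h5 : β * ((L ^ k) w) x ≤ β * (β ^ k * w x) :=
          mul_le_mul_of_nonneg_left (ih x) hβ0
        rw [h1]
        calc ((L ^ k) (L w)) x ≤ β * (β ^ k * w x) := by rw [← h4] at h5; linarith
          _ = β ^ (k+1) * w x := by ring
  -- operator norm bound for iterates
  have hnorm : ∀ k : ℕ, ‖L ^ k‖ ≤ β ^ k * (‖w‖ / m) := by
    intro k
    have hC : 0 ≤ β ^ k * (‖w‖ / m) :=
      mul_nonneg (pow_nonneg hβ0 k) (div_nonneg (norm_nonneg w) hm0.le)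
    refine ContinuousLinearMap.opNorm_le_bound _ hC (fun f => ?_)
    have hfm : ∀ x, |f x| ≤ (‖f‖ / m) * w x := by
      intro x
      have h1 : |f x| ≤ ‖f‖ := by
        simpa [Real.norm_eq_abs] using f.norm_coe_le_norm x
      have h2 : ‖f‖ = (‖f‖ / m) * m := by field_simp
      have h3 : (‖f‖ / m) * m ≤ (‖f‖ / m) * w x :=
        mul_le_mul_of_nonneg_left (hx0' x) (div_nonneg (norm_nonneg f) hm0.le)
      linarith
    have hbound : ∀ (g : C(Set.Icc a b, ℝ)), (∀ x, g x ≤ (‖f‖ / m) * w x) →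
        ∀ x, ((L ^ k) g) x ≤ (‖f‖ / m) * (β ^ k * ‖w‖) := by
      intro g hg x
      have h1 : ((L ^ k) g) x ≤ ((L ^ k) ((‖f‖ / m) • w)) x := by
        refine (hL.pow k).mono (fun y => ?_) x
        simpa using hg y
      have h2 : ((L ^ k) ((‖f‖ / m) • w)) x = (‖f‖ / m) * ((L ^ k) w) x := by
        rw [map_smul]; simp
      have h3 : (‖f‖ / m) * ((L ^ k) w) x ≤ (‖f‖ / m) * (β ^ k * w x) :=
        mul_le_mul_of_nonneg_left (hLkw k x) (div_nonneg (norm_nonneg f) hm0.le)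
      have h4 : (‖f‖ / m) * (β ^ k * w x) ≤ (‖f‖ / m) * (β ^ k * ‖w‖) := by
        refine mul_le_mul_of_nonneg_left ?_ (div_nonneg (norm_nonneg f) hm0.le)
        exact mul_le_mul_of_nonneg_left (hwnorm x) (pow_nonneg hβ0 k)
      linarith
    rw [show β ^ k * (‖w‖ / m) * ‖f‖ = (‖f‖ / m) * (β ^ k * ‖w‖) by
      field_simp]
    refine (ContinuousMap.norm_le _ ?_).mpr (fun x => ?_)
    · positivity
    rw [Real.norm_eq_abs, abs_le]
    constructor
    · have hneg : ∀ y, (-f) y ≤ (‖f‖ / m) * w y := by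
        intro y
        have := (abs_le.mp (hfm y)).1
        simp only [ContinuousMap.neg_apply]
        linarith
      have h := hbound (-f) hneg x
      have heq : ((L ^ k) (-f)) x = -(((L ^ k) f) x) := by
        rw [map_neg]; simp
      rw [heq] at h
      linarith
    · exact hbound f (fun y => (abs_le.mp (hfm y)).2) x
  -- the ENNReal-valued norm bound
  have key : ∀ k : ℕ, (‖L ^ k‖₊ : ℝ≥0∞) ≤
      ENNReal.ofReal (‖w‖ / m) * ENNReal.ofReal β ^ k := by
    intro k
    rw [show ((‖L ^ k‖₊ : ℝ≥0∞)) = ENNReal.ofReal ‖L ^ k‖ from (ofReal_norm _).symm, ← ENNReal.ofReal_pow hβ0, ← ENNReal.ofReal_mul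
      (div_nonneg (norm_nonneg w) hm0.le)]
    exact ENNReal.ofReal_le_ofReal (by linarith [hnorm k])
  -- upper bound for the spectral radius
  have hupper : spectralRadius ℝ L ≤ ENNReal.ofReal β := by
    have main : ∀ ε : ℝ≥0∞, 1 < ε → spectralRadius ℝ L ≤ ENNReal.ofReal β * ε := by
      intro ε hε
      refine (spectrum.spectralRadius_le_liminf_pow_nnnorm_pow_one_div ℝ L).trans ?_
      have h1 : ∀ᶠ n : ℕ in atTop, (ENNReal.ofReal (‖w‖ / m)) ^ (1/(n:ℝ)) ≤ ε :=
        ENNReal.eventually_pow_one_div_le ENNReal.ofReal_ne_top hε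
      have hev : ∀ᶠ n : ℕ in atTop,
          (‖L ^ n‖₊ : ℝ≥0∞) ^ (1/(n:ℝ)) ≤ ENNReal.ofReal β * ε := by
        filter_upwards [h1, eventually_ge_atTop 1] with n h1n hn
        have hn0 : (n : ℝ) ≠ 0 := Nat.cast_ne_zero.mpr (by omega)
        calc (‖L ^ n‖₊ : ℝ≥0∞) ^ (1/(n:ℝ))
            ≤ (ENNReal.ofReal (‖w‖ / m) * ENNReal.ofReal β ^ n) ^ (1/(n:ℝ)) :=
              ENNReal.rpow_le_rpow (key n) (by positivity)
          _ = (ENNReal.ofReal (‖w‖ / m)) ^ (1/(n:ℝ)) * (ENNReal.ofReal β ^ n) ^ (1/(n:ℝ)) :=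
              ENNReal.mul_rpow_of_nonneg _ _ (by positivity)
          _ = (ENNReal.ofReal (‖w‖ / m)) ^ (1/(n:ℝ)) * ENNReal.ofReal β := by
              rw [← ENNReal.rpow_natCast (ENNReal.ofReal β) n, ← ENNReal.rpow_mul]
              congr 1
              rw [mul_one_div, div_self hn0, ENNReal.rpow_one]
          _ ≤ ε * ENNReal.ofReal β := mul_le_mul_left h1n _
          _ = ENNReal.ofReal β * ε := mul_comm _ _
      calc atTop.liminf (fun n : ℕ => (‖L ^ n‖₊ : ℝ≥0∞) ^ (1/(n:ℝ)))
          ≤ atTop.liminf (fun _ : ℕ => ENNReal.ofReal β * ε) := liminf_le_liminf hev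
        _ = ENNReal.ofReal β * ε := liminf_const _
    refine ENNReal.le_of_forall_lt_one_mul_le (fun ρ hρ => ?_)
    rcases eq_or_ne ρ 0 with rfl | hρ0
    · simp
    have hρtop : ρ ≠ ⊤ := (hρ.trans_le le_top).ne
    have hεgt : 1 < ρ⁻¹ := by
      simpa using ENNReal.inv_lt_inv.mpr hρ
    have h := main ρ⁻¹ hεgt
    calc ρ * spectralRadius ℝ L ≤ ρ * (ENNReal.ofReal β * ρ⁻¹) := mul_le_mul_right h ρ
      _ = ENNReal.ofReal β * (ρ * ρ⁻¹) := by ring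
      _ = ENNReal.ofReal β := by rw [ENNReal.mul_inv_cancel hρ0 hρtop, mul_one]
  -- lower bound
  have hlower : ENNReal.ofReal α ≤ spectralRadius ℝ L := by
    rcases le_or_gt α 0 with hα | hα
    · rw [ENNReal.ofReal_of_nonpos hα]; exact zero_le
    by_contra hcon
    push_neg at hcon
    have hrtop : spectralRadius ℝ L ≠ ⊤ := (hcon.trans_le le_top).ne
    have hrlt : (spectralRadius ℝ L).toReal < α :=
      (ENNReal.lt_ofReal_iff_toReal_lt hrtop).mp hcon
    set r : ℝ := (spectralRadius ℝ L).toReal with hr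
    have hr0 : 0 ≤ r := ENNReal.toReal_nonneg
    set t : ℝ := (r + α) / 2 with ht
    have ht1 : r < t := by rw [ht]; linarith
    have ht2 : t < α := by rw [ht]; linarith
    have ht0 : 0 < t := by rw [ht]; linarith
    have hu : ∀ s : ℝ, t ≤ s →
        IsUnit (s • (1 : C(Set.Icc a b, ℝ) →L[ℝ] C(Set.Icc a b, ℝ)) - L) := by
      intro s hs
      have hs0 : 0 < s := lt_of_lt_of_le ht0 hs
      have hnotmem : s ∉ spectrum ℝ L := by
        intro hmem
        have hle : (‖s‖₊ : ℝ≥0∞) ≤ spectralRadius ℝ L :=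
          le_iSup₂ (f := fun k (_ : k ∈ spectrum ℝ L) => (‖k‖₊ : ℝ≥0∞)) s hmem
        rw [show (‖s‖₊ : ℝ≥0∞) = ENNReal.ofReal s from Real.enorm_eq_ofReal hs0.le] at hle
        have hsle : s ≤ r := by
          rw [hr]
          exact (ENNReal.ofReal_le_iff_le_toReal hrtop).mp hle
        linarith
      have h := spectrum.notMem_iff.mp hnotmem
      rwa [Algebra.algebraMap_eq_smul_one] at h
    exact lower_aux hL w hw hαw ht2 hu
  exact ⟨hlower, hupper⟩
end

section
/- Let $\lambda = (1+\sqrt{5})/2$ be the golden ratio. For every real $x \ge 4$ and with $s(x) = c/\ln x$ where $c = 0.52679$, the function $h(x) = \lambda^{-2s(x)} + (x+\lambda-1)^{-2s(x)}$ satisfies $h(x) > 1$. -/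
open Real Finset

private lemma exp_upper {a b : ℝ} (h1 : 0 ≤ a) (h2 : a ≤ 1)
    (hb : 1 + a + a^2/2 + a^3/6 + a^4/24 + a^5/120 + a^6*7/(720*6) ≤ b) :
    Real.exp a ≤ b := by
  have h := Real.exp_bound' h1 h2 (n := 6) (by norm_num)
  refine h.trans (le_trans (le_of_eq ?_) hb)
  simp [Finset.sum_range_succ, Nat.factorial]
  try ring
  simp

private lemma exp_lower {a b : ℝ} (h1 : 0 ≤ a)
    (hb : b ≤ 1 + a + a^2/2 + a^3/6 + a^4/24 + a^5/120 + a^6/720) :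
    b ≤ Real.exp a := by
  have h := Real.sum_le_exp_of_nonneg h1 7
  refine le_trans (le_trans hb (le_of_eq ?_)) h
  simp [Finset.sum_range_succ, Nat.factorial]
  try ring

theorem stmt_4 :
    let lam : ℝ := (1 + Real.sqrt 5) / 2
    let c : ℝ := 0.52679
    ∀ x : ℝ, 4 ≤ x →
      lam ^ (-(2 * (c / Real.log x))) + (x + lam - 1) ^ (-(2 * (c / Real.log x))) > 1 := by
  intro lam c x hx
  have hs5u : Real.sqrt 5 ≤ 2.23607 := by
    rw [show (2.23607:ℝ) = Real.sqrt (2.23607 ^ 2) by rw [Real.sqrt_sq] <;> norm_num]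
    exact Real.sqrt_le_sqrt (by norm_num)
  have hs5l : 2 ≤ Real.sqrt 5 := by
    rw [show (2:ℝ) = Real.sqrt 4 by rw [show (4:ℝ) = 2^2 by norm_num, Real.sqrt_sq] <;> norm_num]
    exact Real.sqrt_le_sqrt (by norm_num)
  have hlam1 : (1:ℝ) < lam := by simp only [lam]; linarith
  have hlamu : lam ≤ 1.618035 := by simp only [lam]; linarith
  have hlampos : (0:ℝ) < lam := by linarith
  -- log x bounds
  have hL : (1.3862:ℝ) < Real.log x := by
    have h4 : Real.log 4 ≤ Real.log x := Real.log_le_log (by norm_num) hx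
    have : Real.log 4 = 2 * Real.log 2 := by
      rw [show (4:ℝ) = 2^2 by norm_num, Real.log_pow]; push_cast; ring
    nlinarith [Real.log_two_gt_d9]
  have hL0 : (0:ℝ) < Real.log x := by linarith
  -- log lam ≤ 0.48125
  have hloglam : Real.log lam ≤ 0.48125 := by
    rw [Real.log_le_iff_le_exp hlampos]
    refine le_trans hlamu (exp_lower (by norm_num) (by norm_num))
  have hloglam0 : 0 ≤ Real.log lam := Real.log_nonneg hlam1.le
  -- base for second term
  have hbase : (0:ℝ) < x + lam - 1 := by linarith
  -- rewrite rpow as exp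
  rw [Real.rpow_def_of_pos hlampos, Real.rpow_def_of_pos hbase]
  -- bound first exponent
  have key1 : -(2 * (c / Real.log x)) * Real.log lam ≥ -0.36578 := by
    have h : 2 * (c / Real.log x) * Real.log lam = (2 * c * Real.log lam) / Real.log x := by
      ring
    have h2 : (2 * c * Real.log lam) / Real.log x ≤ (2 * c * 0.48125) / 1.3862 := by
      apply div_le_div₀ (by positivity) (by nlinarith [hloglam]) (by norm_num) hL.le
    have : 2 * (c / Real.log x) * Real.log lam ≤ 0.36578 := by
      rw [h]; refine h2.trans ?_; simp only [c]; norm_num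
    linarith
  -- bound second exponent
  have hlogb : Real.log (x + lam - 1) ≤ Real.log x + (lam - 1) / x := by
    have hxp : (0:ℝ) < x := by linarith
    have hq : (0:ℝ) < (x + lam - 1) / x := by positivity
    have h1 : Real.log (x + lam - 1) = Real.log x + Real.log ((x + lam - 1) / x) := by
      rw [Real.log_div (by linarith) (by linarith)]; ring
    have h2 : Real.log ((x + lam - 1) / x) ≤ (x + lam - 1) / x - 1 :=
      Real.log_le_sub_one_of_pos hq
    have h3 : (x + lam - 1) / x - 1 = (lam - 1) / x := by field_simp; ring
    rw [h1]; rw [h3] at h2; linarith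
  have key2 : -(2 * (c / Real.log x)) * Real.log (x + lam - 1) ≥ -1.17102 := by
    have hlb0 : 0 ≤ Real.log (x + lam - 1) := Real.log_nonneg (by linarith)
    have h : 2 * (c / Real.log x) * Real.log (x + lam - 1)
        ≤ 2 * c + (2 * c * (lam - 1)) / (x * Real.log x) := by
      have e : 2 * (c / Real.log x) * (Real.log x + (lam - 1) / x)
          = 2 * c + (2 * c * (lam - 1)) / (x * Real.log x) := by
        field_simp
      have : 2 * (c / Real.log x) * Real.log (x + lam - 1)
          ≤ 2 * (c / Real.log x) * (Real.log x + (lam - 1) / x) := by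
        apply mul_le_mul_of_nonneg_left hlogb (by positivity)
      rw [e] at this; exact this
    have h2 : (2 * c * (lam - 1)) / (x * Real.log x) ≤ (2 * c * 0.618035) / (4 * 1.3862) := by
      apply div_le_div₀ (by positivity) (by nlinarith [hlamu]) (by norm_num)
        (by nlinarith)
    have : 2 * (c / Real.log x) * Real.log (x + lam - 1) ≤ 1.17102 := by
      refine h.trans ?_
      have : (2 * c * 0.618035) / (4 * 1.3862) + 2 * c ≤ 1.17102 := by
        simp only [c]; norm_num
      linarith
    linarith
  -- numeric exp bounds
  have e1 : Real.exp (-(2 * (c / Real.log x)) * Real.log lam) ≥ 1 / 1.4417 := by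
    have h1 : Real.exp (0.36578 : ℝ) ≤ 1.4417 := exp_upper (by norm_num) (by norm_num) (by norm_num)
    have h2 : Real.exp (-(0.36578:ℝ)) ≥ 1 / 1.4417 := by
      rw [Real.exp_neg, ge_iff_le, one_div]
      gcongr
    exact le_trans h2 (Real.exp_le_exp.2 key1)
  have e2 : Real.exp (-(2 * (c / Real.log x)) * Real.log (x + lam - 1)) ≥ 1 / 3.2257 := by
    have hh : Real.exp (0.58551 : ℝ) ≤ 1.7960 := exp_upper (by norm_num) (by norm_num) (by norm_num)
    have h1 : Real.exp (1.17102 : ℝ) ≤ 3.2257 := by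
      rw [show (1.17102:ℝ) = 0.58551 + 0.58551 by norm_num, Real.exp_add]
      nlinarith [Real.exp_pos (0.58551:ℝ)]
    have h2 : Real.exp (-(1.17102:ℝ)) ≥ 1 / 3.2257 := by
      rw [Real.exp_neg, ge_iff_le, one_div]
      gcongr
    exact le_trans h2 (Real.exp_le_exp.2 key2)
  rw [mul_comm (Real.log lam), mul_comm (Real.log (x + lam - 1))]
  have : (1:ℝ) < 1 / 1.4417 + 1 / 3.2257 := by norm_num
  linarith
end

section
/- Let $\lambda = (1+\sqrt{5})/2$. The function $h(x) = \lambda^{-2s(x)} + (x+\lambda-1)^{-2s(x)}$ with $s(x) = c/\ln x$ for a fixed constant $c>0$ is strictly increasing on $[4,\infty)$, i.e., $h'(x) > 0$ for all $x \ge 4$. -/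
open Real Set

private lemma aux5 (c : ℝ) (hc : 0 < c) (x : ℝ) (hx : 4 ≤ x) :
    ∃ d, HasDerivAt (fun x : ℝ =>
      ((1 + Real.sqrt 5) / 2) ^ (-(2 * (c / Real.log x))) +
        (x + (1 + Real.sqrt 5) / 2 - 1) ^ (-(2 * (c / Real.log x)))) d x ∧ 0 < d := by
  set lam : ℝ := (1 + Real.sqrt 5) / 2 with hlamdef
  have h5 : (2:ℝ) < Real.sqrt 5 := by
    nlinarith [Real.sq_sqrt (by norm_num : (5:ℝ) ≥ 0), Real.sqrt_nonneg 5]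
  have hlam1 : 1 < lam := by rw [hlamdef]; linarith
  have hlam0 : 0 < lam := by linarith
  have hx0 : 0 < x := by linarith
  have hL : 0 < Real.log x := Real.log_pos (by linarith)
  have hLne : Real.log x ≠ 0 := ne_of_gt hL
  have hB : 0 < x + lam - 1 := by linarith
  -- derivative of exponent
  have hg : HasDerivAt (fun t : ℝ => -(2 * (c / Real.log t)))
      (-(2 * ((0 * Real.log x - c * x⁻¹) / (Real.log x) ^ 2))) x :=
    (((hasDerivAt_const x c).div (Real.hasDerivAt_log (ne_of_gt hx0)) hLne).const_mul 2).neg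
  set g' : ℝ := -(2 * ((0 * Real.log x - c * x⁻¹) / (Real.log x) ^ 2)) with hg'def
  set gx : ℝ := -(2 * (c / Real.log x)) with hgxdef
  have h1 : HasDerivAt (fun t : ℝ => lam ^ (-(2 * (c / Real.log t))))
      (0 * gx * lam ^ (gx - 1) + g' * lam ^ gx * Real.log lam) x :=
    (hasDerivAt_const x lam).rpow hg hlam0
  have hBAt : HasDerivAt (fun t : ℝ => t + lam - 1) 1 x := by
    simpa using ((hasDerivAt_id x).add_const lam).sub_const 1
  have h2 : HasDerivAt (fun t : ℝ => (t + lam - 1) ^ (-(2 * (c / Real.log t))))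
      (1 * gx * (x + lam - 1) ^ (gx - 1) + g' * (x + lam - 1) ^ gx * Real.log (x + lam - 1)) x :=
    hBAt.rpow hg hB
  refine ⟨_, h1.add h2, ?_⟩
  have hg'val : g' = 2 * c / (x * (Real.log x) ^ 2) := by
    rw [hg'def]; field_simp; ring
  have hlogB : 0 < Real.log (x + lam - 1) := Real.log_pos (by linarith)
  have hg'pos : 0 < g' := by
    rw [hg'val]; positivity
  have hfirst : 0 < 0 * gx * lam ^ (gx - 1) + g' * lam ^ gx * Real.log lam := by
    have h0 : 0 * gx * lam ^ (gx - 1) = 0 := by ring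
    rw [h0, zero_add]
    exact mul_pos (mul_pos hg'pos (Real.rpow_pos_of_pos hlam0 gx)) (Real.log_pos hlam1)
  have hBx : x < x + lam - 1 := by linarith
  have hkey : x * Real.log x < (x + lam - 1) * Real.log (x + lam - 1) := by
    have h1' : x * Real.log x < x * Real.log (x + lam - 1) :=
      (mul_lt_mul_iff_right₀ hx0).2 (Real.log_lt_log hx0 hBx)
    have h2' : x * Real.log (x + lam - 1) < (x + lam - 1) * Real.log (x + lam - 1) :=
      (mul_lt_mul_iff_left₀ hlogB).2 hBx
    linarith
  have hsecond : 0 < 1 * gx * (x + lam - 1) ^ (gx - 1)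
      + g' * (x + lam - 1) ^ gx * Real.log (x + lam - 1) := by
    have hsplit : (x + lam - 1) ^ gx = (x + lam - 1) ^ (gx - 1) * (x + lam - 1) := by
      rw [← Real.rpow_add_one (ne_of_gt hB) (gx - 1)]; ring_nf
    have hpow : 0 < (x + lam - 1) ^ (gx - 1) := Real.rpow_pos_of_pos hB _
    rw [hsplit]
    have hfac : 1 * gx * (x + lam - 1) ^ (gx - 1)
        + g' * ((x + lam - 1) ^ (gx - 1) * (x + lam - 1)) * Real.log (x + lam - 1)
        = (x + lam - 1) ^ (gx - 1) * (gx + g' * ((x + lam - 1) * Real.log (x + lam - 1))) := by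
      ring
    rw [hfac]
    apply mul_pos hpow
    have : gx + g' * ((x + lam - 1) * Real.log (x + lam - 1))
        = (2 * c / (x * (Real.log x) ^ 2))
          * ((x + lam - 1) * Real.log (x + lam - 1) - x * Real.log x) := by
      rw [hg'val, hgxdef]; field_simp; ring
    rw [this]
    apply mul_pos (by positivity) (by linarith)
  linarith

theorem stmt_5 (c : ℝ) (hc : 0 < c) :
    let lam : ℝ := (1 + Real.sqrt 5) / 2
    let h : ℝ → ℝ := fun x =>
      lam ^ (-(2 * (c / Real.log x))) + (x + lam - 1) ^ (-(2 * (c / Real.log x)))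
    StrictMonoOn h (Set.Ici (4:ℝ)) ∧ ∀ x : ℝ, 4 ≤ x → 0 < deriv h x := by
  intro lam h
  have key : ∀ x : ℝ, 4 ≤ x → ∃ d, HasDerivAt h d x ∧ 0 < d := fun x hx => aux5 c hc x hx
  have hderiv : ∀ x : ℝ, 4 ≤ x → 0 < deriv h x := by
    intro x hx
    obtain ⟨d, hd, hdpos⟩ := key x hx
    rwa [hd.deriv]
  refine ⟨?_, hderiv⟩
  apply strictMonoOn_of_deriv_pos (convex_Ici 4)
  · intro x hx
    exact ((key x hx).choose_spec.1.differentiableAt.continuousAt).continuousWithinAt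
  · intro x hx
    rw [interior_Ici] at hx
    exact hderiv x (le_of_lt hx)
end

section
/- Let $p_1 < p_2 < p_3 < \cdots$ be the primes listed in increasing order. Then for all integers $m \ge n \ge 1$ with $m \ge 2$, we have $p_n p_m \ge p_{n+m}$. -/
namespace Ishikawa


/-- Trial division: no divisor `e` with `d ≤ e < d + fuel` and `e*e ≤ n` divides `n`. -/
def noDiv (n : ℕ) : ℕ → ℕ → Bool
  | _, 0 => true
  | d, fuel+1 => (decide (n < d*d)) || ((n % d != 0) && noDiv n (d+1) fuel)

def isP (n : ℕ) : Bool := decide (2 ≤ n) && noDiv n 2 79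

def cnt : ℕ → ℕ
  | 0 => 0
  | k+1 => cnt k + (if isP k then 1 else 0)

def blk (s : ℕ) : ℕ → ℕ
  | 0 => 0
  | l+1 => blk s l + (if isP (s+l) then 1 else 0)

lemma cnt_blk (a : ℕ) : ∀ b, cnt (a+b) = cnt a + blk a b := by
  intro b; induction b with
  | zero => rfl
  | succ b ih => rw [← Nat.add_assoc, cnt, ih, blk]; omega

lemma noDiv_iff (n : ℕ) : ∀ (fuel d : ℕ), 1 ≤ d →
    (noDiv n d fuel = true ↔ ∀ e, d ≤ e → e < d + fuel → e*e ≤ n → ¬ e ∣ n) := by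
  intro fuel
  induction fuel with
  | zero => intro d _; simp only [noDiv]; constructor
            · intro _ e h1 h2; omega
            · intro _; trivial
  | succ fuel ih =>
    intro d hd
    simp only [noDiv, Bool.or_eq_true, decide_eq_true_eq, Bool.and_eq_true, bne_iff_ne, ne_eq,
      ih (d+1) (by omega)]
    constructor
    · rintro (hlt | ⟨hnd, hrest⟩) e h1 h2 h3
      · exfalso; have : d*d ≤ e*e := Nat.mul_le_mul h1 h1; omega
      · rcases eq_or_lt_of_le h1 with rfl | h1'
        · intro hdvd; exact hnd (Nat.mod_eq_zero_of_dvd hdvd)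
        · exact hrest e h1' (by omega) h3
    · intro h
      by_cases hlt : n < d*d
      · exact Or.inl hlt
      · refine Or.inr ⟨?_, fun e h1 h2 h3 => h e (by omega) (by omega) h3⟩
        intro hmod
        exact h d le_rfl (by omega) (by omega) (Nat.dvd_of_mod_eq_zero hmod)

lemma isP_iff {n : ℕ} (hn : n ≤ 6560) : isP n = true ↔ n.Prime := by
  rw [Nat.prime_def_le_sqrt]
  simp only [isP, Bool.and_eq_true, decide_eq_true_eq, noDiv_iff n 79 2 (by omega)]
  constructor
  · rintro ⟨h2, h⟩
    refine ⟨h2, fun e he hes => h e he (by nlinarith [Nat.sqrt_le' n]) (Nat.le_sqrt.mp hes)⟩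
  · rintro ⟨h2, h⟩
    refine ⟨h2, fun e he _ hes => h e he (Nat.le_sqrt.mpr hes)⟩

lemma cnt_eq : ∀ k : ℕ, k ≤ 6561 → cnt k = Nat.count Nat.Prime k := by
  intro k
  induction k with
  | zero => intro _; rfl
  | succ k ih =>
    intro hk
    rw [cnt, Nat.count_succ, ih (by omega)]
    congr 1
    by_cases h : Nat.Prime k
    · rw [if_pos ((isP_iff (by omega)).mpr h), if_pos h]
    · rw [if_neg (fun hh => h ((isP_iff (by omega)).mp hh)), if_neg h]

lemma meshstep {z zp y : ℕ} (h1 : z ≤ y) (h2 : y < zp)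
    (h3 : 2 * Nat.count Nat.Prime zp ≤ Nat.count Nat.Prime (3*z+1)) :
    2 * Nat.count Nat.Prime (y+1) ≤ Nat.count Nat.Prime (3*y+1) := by
  have ha := Nat.count_monotone Nat.Prime (show y+1 ≤ zp by omega)
  have hb := Nat.count_monotone Nat.Prime (show 3*z+1 ≤ 3*y+1 by omega)
  omega

set_option maxRecDepth 40000 in
set_option maxHeartbeats 4000000 in
lemma finite_case : ∀ y : ℕ, 3 ≤ y → y ≤ 2052 → 2 * Nat.count Nat.Prime (y+1) ≤ Nat.count Nat.Prime (3*y+1) := by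
  have hc : ∀ k : ℕ, k ≤ 6561 → cnt k = Nat.count Nat.Prime k := cnt_eq
  have h5 : cnt 5 = 2 := by decide
  have h7 : cnt 7 = 3 := by
    rw [show (7:ℕ) = 5 + 2 by norm_num, cnt_blk, h5]; decide
  have h10 : cnt 10 = 4 := by
    rw [show (10:ℕ) = 7 + 3 by norm_num, cnt_blk, h7]; decide
  have h11 : cnt 11 = 4 := by
    rw [show (11:ℕ) = 10 + 1 by norm_num, cnt_blk, h10]; decide
  have h13 : cnt 13 = 5 := by
    rw [show (13:ℕ) = 11 + 2 by norm_num, cnt_blk, h11]; decide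
  have h16 : cnt 16 = 6 := by
    rw [show (16:ℕ) = 13 + 3 by norm_num, cnt_blk, h13]; decide
  have h17 : cnt 17 = 6 := by
    rw [show (17:ℕ) = 16 + 1 by norm_num, cnt_blk, h16]; decide
  have h19 : cnt 19 = 7 := by
    rw [show (19:ℕ) = 17 + 2 by norm_num, cnt_blk, h17]; decide
  have h22 : cnt 22 = 8 := by
    rw [show (22:ℕ) = 19 + 3 by norm_num, cnt_blk, h19]; decide
  have h23 : cnt 23 = 8 := by
    rw [show (23:ℕ) = 22 + 1 by norm_num, cnt_blk, h22]; decide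
  have h29 : cnt 29 = 9 := by
    rw [show (29:ℕ) = 23 + 6 by norm_num, cnt_blk, h23]; decide
  have h34 : cnt 34 = 11 := by
    rw [show (34:ℕ) = 29 + 5 by norm_num, cnt_blk, h29]; decide
  have h37 : cnt 37 = 11 := by
    rw [show (37:ℕ) = 34 + 3 by norm_num, cnt_blk, h34]; decide
  have h40 : cnt 40 = 12 := by
    rw [show (40:ℕ) = 37 + 3 by norm_num, cnt_blk, h37]; decide
  have h47 : cnt 47 = 14 := by
    rw [show (47:ℕ) = 40 + 7 by norm_num, cnt_blk, h40]; decide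
  have h52 : cnt 52 = 15 := by
    rw [show (52:ℕ) = 47 + 5 by norm_num, cnt_blk, h47]; decide
  have h58 : cnt 58 = 16 := by
    rw [show (58:ℕ) = 52 + 6 by norm_num, cnt_blk, h52]; decide
  have h61 : cnt 61 = 17 := by
    rw [show (61:ℕ) = 58 + 3 by norm_num, cnt_blk, h58]; decide
  have h70 : cnt 70 = 19 := by
    rw [show (70:ℕ) = 61 + 9 by norm_num, cnt_blk, h61]; decide
  have h79 : cnt 79 = 21 := by
    rw [show (79:ℕ) = 70 + 9 by norm_num, cnt_blk, h70]; decide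
  have h88 : cnt 88 = 23 := by
    rw [show (88:ℕ) = 79 + 9 by norm_num, cnt_blk, h79]; decide
  have h101 : cnt 101 = 25 := by
    rw [show (101:ℕ) = 88 + 13 by norm_num, cnt_blk, h88]; decide
  have h112 : cnt 112 = 29 := by
    rw [show (112:ℕ) = 101 + 11 by norm_num, cnt_blk, h101]; decide
  have h131 : cnt 131 = 31 := by
    rw [show (131:ℕ) = 112 + 19 by norm_num, cnt_blk, h112]; decide
  have h142 : cnt 142 = 34 := by
    rw [show (142:ℕ) = 131 + 11 by norm_num, cnt_blk, h131]; decide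
  have h167 : cnt 167 = 38 := by
    rw [show (167:ℕ) = 142 + 25 by norm_num, cnt_blk, h142]; decide
  have h184 : cnt 184 = 42 := by
    rw [show (184:ℕ) = 167 + 17 by norm_num, cnt_blk, h167]; decide
  have h223 : cnt 223 = 47 := by
    rw [show (223:ℕ) = 184 + 39 by norm_num, cnt_blk, h184]; decide
  have h238 : cnt 238 = 51 := by
    rw [show (238:ℕ) = 223 + 15 by norm_num, cnt_blk, h223]; decide
  have h283 : cnt 283 = 60 := by
    rw [show (283:ℕ) = 238 + 45 by norm_num, cnt_blk, h238]; decide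
  have h304 : cnt 304 = 62 := by
    rw [show (304:ℕ) = 283 + 21 by norm_num, cnt_blk, h283]; decide
  have h373 : cnt 373 = 73 := by
    rw [show (373:ℕ) = 304 + 69 by norm_num, cnt_blk, h304]; decide
  have h394 : cnt 394 = 77 := by
    rw [show (394:ℕ) = 373 + 21 by norm_num, cnt_blk, h373]; decide
  have h491 : cnt 491 = 93 := by
    rw [show (491:ℕ) = 394 + 97 by norm_num, cnt_blk, h394]; decide
  have h502 : cnt 502 = 95 := by
    rw [show (502:ℕ) = 491 + 11 by norm_num, cnt_blk, h491]; decide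
  have h643 : cnt 643 = 116 := by
    rw [show (643:ℕ) = 502 + 141 by norm_num, cnt_blk, h502]; decide
  have h670 : cnt 670 = 121 := by
    rw [show (670:ℕ) = 643 + 27 by norm_num, cnt_blk, h643]; decide
  have h850 : cnt 850 = 146 := by
    rw [show (850:ℕ) = 670 + 180 by norm_num, cnt_blk, h670]; decide
  have h853 : cnt 853 = 146 := by
    rw [show (853:ℕ) = 850 + 3 by norm_num, cnt_blk, h850]; decide
  have h1120 : cnt 1120 = 187 := by
    rw [show (1120:ℕ) = 853 + 267 by norm_num, cnt_blk, h853]; decide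
  have h1123 : cnt 1123 = 187 := by
    rw [show (1123:ℕ) = 1120 + 3 by norm_num, cnt_blk, h1120]; decide
  have h1474 : cnt 1474 = 233 := by
    rw [show (1474:ℕ) = 1123 + 351 by norm_num, cnt_blk, h1123]; decide
  have h1493 : cnt 1493 = 237 := by
    rw [show (1493:ℕ) = 1474 + 19 by norm_num, cnt_blk, h1474]; decide
  have h1930 : cnt 1930 = 293 := by
    rw [show (1930:ℕ) = 1493 + 437 by norm_num, cnt_blk, h1493]; decide
  have h2003 : cnt 2003 = 303 := by
    rw [show (2003:ℕ) = 1930 + 73 by norm_num, cnt_blk, h1930]; decide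
  have h2560 : cnt 2560 = 375 := by
    rw [show (2560:ℕ) = 2003 + 557 by norm_num, cnt_blk, h2003]; decide
  have h2699 : cnt 2699 = 392 := by
    rw [show (2699:ℕ) = 2560 + 139 by norm_num, cnt_blk, h2560]; decide
  have h3370 : cnt 3370 = 474 := by
    rw [show (3370:ℕ) = 2699 + 671 by norm_num, cnt_blk, h2699]; decide
  have h4170 : cnt 4170 = 573 := by
    rw [show (4170:ℕ) = 3370 + 800 by norm_num, cnt_blk, h3370]; decide
  have h4480 : cnt 4480 = 607 := by
    rw [show (4480:ℕ) = 4170 + 310 by norm_num, cnt_blk, h4170]; decide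
  have h5280 : cnt 5280 = 700 := by
    rw [show (5280:ℕ) = 4480 + 800 by norm_num, cnt_blk, h4480]; decide
  have h6010 : cnt 6010 = 784 := by
    rw [show (6010:ℕ) = 5280 + 730 by norm_num, cnt_blk, h5280]; decide
  intro y hy1 hy2
  rcases lt_or_ge y 5 with hcase | hge5
  · exact meshstep (show 3 ≤ y by omega) hcase (by rw [← hc 5 (by norm_num), ← hc 10 (by norm_num), h5, h10] <;> norm_num)
  rcases lt_or_ge y 7 with hcase | hge7
  · exact meshstep (show 5 ≤ y by omega) hcase (by rw [← hc 7 (by norm_num), ← hc 16 (by norm_num), h7, h16] <;> norm_num)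
  rcases lt_or_ge y 11 with hcase | hge11
  · exact meshstep (show 7 ≤ y by omega) hcase (by rw [← hc 11 (by norm_num), ← hc 22 (by norm_num), h11, h22] <;> norm_num)
  rcases lt_or_ge y 13 with hcase | hge13
  · exact meshstep (show 11 ≤ y by omega) hcase (by rw [← hc 13 (by norm_num), ← hc 34 (by norm_num), h13, h34] <;> norm_num)
  rcases lt_or_ge y 17 with hcase | hge17
  · exact meshstep (show 13 ≤ y by omega) hcase (by rw [← hc 17 (by norm_num), ← hc 40 (by norm_num), h17, h40] <;> norm_num)
  rcases lt_or_ge y 19 with hcase | hge19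
  · exact meshstep (show 17 ≤ y by omega) hcase (by rw [← hc 19 (by norm_num), ← hc 52 (by norm_num), h19, h52] <;> norm_num)
  rcases lt_or_ge y 23 with hcase | hge23
  · exact meshstep (show 19 ≤ y by omega) hcase (by rw [← hc 23 (by norm_num), ← hc 58 (by norm_num), h23, h58] <;> norm_num)
  rcases lt_or_ge y 29 with hcase | hge29
  · exact meshstep (show 23 ≤ y by omega) hcase (by rw [← hc 29 (by norm_num), ← hc 70 (by norm_num), h29, h70] <;> norm_num)
  rcases lt_or_ge y 37 with hcase | hge37
  · exact meshstep (show 29 ≤ y by omega) hcase (by rw [← hc 37 (by norm_num), ← hc 88 (by norm_num), h37, h88] <;> norm_num)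
  rcases lt_or_ge y 47 with hcase | hge47
  · exact meshstep (show 37 ≤ y by omega) hcase (by rw [← hc 47 (by norm_num), ← hc 112 (by norm_num), h47, h112] <;> norm_num)
  rcases lt_or_ge y 61 with hcase | hge61
  · exact meshstep (show 47 ≤ y by omega) hcase (by rw [← hc 61 (by norm_num), ← hc 142 (by norm_num), h61, h142] <;> norm_num)
  rcases lt_or_ge y 79 with hcase | hge79
  · exact meshstep (show 61 ≤ y by omega) hcase (by rw [← hc 79 (by norm_num), ← hc 184 (by norm_num), h79, h184] <;> norm_num)
  rcases lt_or_ge y 101 with hcase | hge101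
  · exact meshstep (show 79 ≤ y by omega) hcase (by rw [← hc 101 (by norm_num), ← hc 238 (by norm_num), h101, h238] <;> norm_num)
  rcases lt_or_ge y 131 with hcase | hge131
  · exact meshstep (show 101 ≤ y by omega) hcase (by rw [← hc 131 (by norm_num), ← hc 304 (by norm_num), h131, h304] <;> norm_num)
  rcases lt_or_ge y 167 with hcase | hge167
  · exact meshstep (show 131 ≤ y by omega) hcase (by rw [← hc 167 (by norm_num), ← hc 394 (by norm_num), h167, h394] <;> norm_num)
  rcases lt_or_ge y 223 with hcase | hge223
  · exact meshstep (show 167 ≤ y by omega) hcase (by rw [← hc 223 (by norm_num), ← hc 502 (by norm_num), h223, h502] <;> norm_num)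
  rcases lt_or_ge y 283 with hcase | hge283
  · exact meshstep (show 223 ≤ y by omega) hcase (by rw [← hc 283 (by norm_num), ← hc 670 (by norm_num), h283, h670] <;> norm_num)
  rcases lt_or_ge y 373 with hcase | hge373
  · exact meshstep (show 283 ≤ y by omega) hcase (by rw [← hc 373 (by norm_num), ← hc 850 (by norm_num), h373, h850] <;> norm_num)
  rcases lt_or_ge y 491 with hcase | hge491
  · exact meshstep (show 373 ≤ y by omega) hcase (by rw [← hc 491 (by norm_num), ← hc 1120 (by norm_num), h491, h1120] <;> norm_num)
  rcases lt_or_ge y 643 with hcase | hge643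
  · exact meshstep (show 491 ≤ y by omega) hcase (by rw [← hc 643 (by norm_num), ← hc 1474 (by norm_num), h643, h1474] <;> norm_num)
  rcases lt_or_ge y 853 with hcase | hge853
  · exact meshstep (show 643 ≤ y by omega) hcase (by rw [← hc 853 (by norm_num), ← hc 1930 (by norm_num), h853, h1930] <;> norm_num)
  rcases lt_or_ge y 1123 with hcase | hge1123
  · exact meshstep (show 853 ≤ y by omega) hcase (by rw [← hc 1123 (by norm_num), ← hc 2560 (by norm_num), h1123, h2560] <;> norm_num)
  rcases lt_or_ge y 1493 with hcase | hge1493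
  · exact meshstep (show 1123 ≤ y by omega) hcase (by rw [← hc 1493 (by norm_num), ← hc 3370 (by norm_num), h1493, h3370] <;> norm_num)
  rcases lt_or_ge y 2003 with hcase | hge2003
  · exact meshstep (show 1493 ≤ y by omega) hcase (by rw [← hc 2003 (by norm_num), ← hc 4480 (by norm_num), h2003, h4480] <;> norm_num)
  have hcase : y < 2699 := by omega
  exact meshstep (show 2003 ≤ y by omega) hcase (by rw [← hc 2699 (by norm_num), ← hc 6010 (by norm_num), h2699, h6010] <;> norm_num)



lemma count_le_half : ∀ k : ℕ, Nat.count Nat.Prime k ≤ (k+1)/2 := by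
  intro k
  induction k using Nat.strong_induction_on with
  | _ k ih =>
  rcases lt_or_ge k 5 with h | h
  · interval_cases k <;> decide
  · obtain ⟨j, rfl⟩ : ∃ j, k = j + 2 := ⟨k - 2, by omega⟩
    have h1 := ih j (by omega)
    have step : Nat.count Nat.Prime (j+2) = Nat.count Nat.Prime j
        + (if Nat.Prime j then 1 else 0) + (if Nat.Prime (j+1) then 1 else 0) := by
      rw [Nat.count_succ, Nat.count_succ]
    rcases Nat.even_or_odd j with hj | hj
    · have hnp : ¬ Nat.Prime j := by
        intro hp; rw [Nat.Prime.even_iff hp] at hj; omega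
      rw [if_neg hnp] at step
      have : (if Nat.Prime (j+1) then 1 else 0) ≤ 1 := by split <;> omega
      omega
    · have hj1 : Even (j+1) := Odd.add_one hj
      have hnp : ¬ Nat.Prime (j+1) := by
        intro hp; rw [Nat.Prime.even_iff hp] at hj1; omega
      rw [if_neg hnp] at step
      have : (if Nat.Prime j then 1 else 0) ≤ 1 := by split <;> omega
      omega

lemma centralBinom_le (a : ℕ) (ha : 3 ≤ a) :
    Nat.centralBinom a ≤ (2*a) ^ (Nat.count Nat.Prime (Nat.sqrt (2*a) + 1))
      * 4 ^ (2*a/3)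
      * (2*a) ^ (Nat.count Nat.Prime (2*a+1) - Nat.count Nat.Prime (a+1)) := by
  classical
  have n2_pos : 0 < 2*a := by omega
  set s := Nat.sqrt (2*a) with hs
  set f : ℕ → ℕ := fun p => p ^ (Nat.centralBinom a).factorization p with hf
  set S : Finset ℕ := (Finset.range (2*a+1)).filter Nat.Prime with hS
  have hCB : Nat.centralBinom a = ∏ p ∈ S, f p := by
    rw [hS, Finset.prod_filter_of_ne, Nat.prod_pow_factorization_centralBinom]
    intro p _ h
    contrapose! h
    rw [hf]; dsimp only
    rw [Nat.factorization_eq_zero_of_not_prime _ h, pow_zero]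
  have split1 := Finset.prod_filter_mul_prod_filter_not S (· ≤ s) f
  have split2 := Finset.prod_filter_mul_prod_filter_not (S.filter (¬ · ≤ s)) (· ≤ 2*a/3) f
  have split3 := Finset.prod_filter_mul_prod_filter_not
    ((S.filter (¬ · ≤ s)).filter (¬ · ≤ 2*a/3)) (· ≤ a) f
  -- P1 bound
  have hP1 : ∏ p ∈ S.filter (· ≤ s), f p ≤ (2*a) ^ (Nat.count Nat.Prime (s + 1)) := by
    have hsub : S.filter (· ≤ s) ⊆ (Finset.range (s+1)).filter Nat.Prime := by
      intro p hp
      simp only [hS, Finset.mem_filter, Finset.mem_range] at hp ⊢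
      exact ⟨by omega, hp.1.2⟩
    calc ∏ p ∈ S.filter (· ≤ s), f p ≤ ∏ _p ∈ S.filter (· ≤ s), (2*a) :=
          Finset.prod_le_prod' fun p _ => Nat.pow_factorization_choose_le n2_pos
      _ = (2*a) ^ (S.filter (· ≤ s)).card := Finset.prod_const _
      _ ≤ (2*a) ^ (Nat.count Nat.Prime (s+1)) := by
          apply Nat.pow_le_pow_right n2_pos
          rw [Nat.count_eq_card_filter_range]
          exact Finset.card_le_card hsub
  -- P2 bound
  have hP2 : ∏ p ∈ (S.filter (¬ · ≤ s)).filter (· ≤ 2*a/3), f p ≤ 4 ^ (2*a/3) := by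
    refine le_trans ?_ (primorial_le_4_pow (2*a/3))
    have hstep : ∀ p ∈ (S.filter (¬ · ≤ s)).filter (· ≤ 2*a/3), f p ≤ p := by
      intro p hp
      simp only [hS, Finset.mem_filter, Finset.mem_range] at hp
      obtain ⟨⟨⟨hpr, hprime⟩, hps⟩, hp3⟩ := hp
      have h2 : 2*a < p^2 := by
        have := Nat.sqrt_lt'.mp (by omega : Nat.sqrt (2*a) < p)
        nlinarith
      have hv : (Nat.centralBinom a).factorization p ≤ 1 := Nat.factorization_choose_le_one h2
      calc f p ≤ p ^ 1 := Nat.pow_le_pow_right hprime.pos hv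
        _ = p := pow_one p
    have hsub : (S.filter (¬ · ≤ s)).filter (· ≤ 2*a/3) ⊆
        (Finset.range (2*a/3+1)).filter Nat.Prime := by
      intro p hp
      simp only [hS, Finset.mem_filter, Finset.mem_range] at hp ⊢
      exact ⟨by omega, hp.1.1.2⟩
    calc ∏ p ∈ (S.filter (¬ · ≤ s)).filter (· ≤ 2*a/3), f p
        ≤ ∏ p ∈ (S.filter (¬ · ≤ s)).filter (· ≤ 2*a/3), p := Finset.prod_le_prod' hstep
      _ ≤ ∏ p ∈ (Finset.range (2*a/3+1)).filter Nat.Prime, p := by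
          refine Finset.prod_le_prod_of_subset_of_one_le' hsub ?_
          intro p hp _
          simp only [Finset.mem_filter] at hp
          exact hp.2.one_lt.le.trans' (by omega)
      _ = primorial (2*a/3) := rfl
  -- P3 = 1
  have hP3 : ∏ p ∈ ((S.filter (¬ · ≤ s)).filter (¬ · ≤ 2*a/3)).filter (· ≤ a), f p = 1 := by
    apply Finset.prod_eq_one
    intro p hp
    simp only [hS, Finset.mem_filter, Finset.mem_range] at hp
    obtain ⟨⟨⟨⟨hpr, hprime⟩, hps⟩, hp3⟩, hpa⟩ := hp
    rw [hf]; dsimp only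
    rw [Nat.factorization_centralBinom_of_two_mul_self_lt_three_mul (by omega : 2 < a) hpa
      (by omega : 2*a < 3*p), pow_zero]
  -- P4 bound
  have hcard4 : (((S.filter (¬ · ≤ s)).filter (¬ · ≤ 2*a/3)).filter (¬ · ≤ a)).card
      ≤ Nat.count Nat.Prime (2*a+1) - Nat.count Nat.Prime (a+1) := by
    have hsub : ((S.filter (¬ · ≤ s)).filter (¬ · ≤ 2*a/3)).filter (¬ · ≤ a)
        ⊆ S.filter (¬ · ≤ a) := by
      intro p hp
      simp only [Finset.mem_filter] at hp ⊢
      exact ⟨hp.1.1.1, hp.2⟩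
    have hEq : S.filter (· ≤ a) = (Finset.range (a+1)).filter Nat.Prime := by
      ext p
      simp only [hS, Finset.mem_filter, Finset.mem_range]
      constructor
      · rintro ⟨⟨h1, h2⟩, h3⟩; exact ⟨by omega, h2⟩
      · rintro ⟨h1, h2⟩; exact ⟨⟨by omega, h2⟩, by omega⟩
    have hsplit := Finset.card_filter_add_card_filter_not (s := S) (p := (· ≤ a))
    have hc2 : S.card = Nat.count Nat.Prime (2*a+1) := by
      rw [Nat.count_eq_card_filter_range, hS]
    have hc1 : (S.filter (· ≤ a)).card = Nat.count Nat.Prime (a+1) := by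
      rw [hEq, Nat.count_eq_card_filter_range]
    have := Finset.card_le_card hsub
    omega
  have hP4 : ∏ p ∈ ((S.filter (¬ · ≤ s)).filter (¬ · ≤ 2*a/3)).filter (¬ · ≤ a), f p
      ≤ (2*a) ^ (Nat.count Nat.Prime (2*a+1) - Nat.count Nat.Prime (a+1)) := by
    calc ∏ p ∈ ((S.filter (¬ · ≤ s)).filter (¬ · ≤ 2*a/3)).filter (¬ · ≤ a), f p
        ≤ ∏ _p ∈ ((S.filter (¬ · ≤ s)).filter (¬ · ≤ 2*a/3)).filter (¬ · ≤ a), (2*a) :=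
          Finset.prod_le_prod' fun p _ => Nat.pow_factorization_choose_le n2_pos
      _ = (2*a) ^ (((S.filter (¬ · ≤ s)).filter (¬ · ≤ 2*a/3)).filter (¬ · ≤ a)).card :=
          Finset.prod_const _
      _ ≤ _ := Nat.pow_le_pow_right n2_pos hcard4
  calc Nat.centralBinom a = ∏ p ∈ S, f p := hCB
    _ = (∏ p ∈ S.filter (· ≤ s), f p) * ((∏ p ∈ (S.filter (¬ · ≤ s)).filter (· ≤ 2*a/3), f p)
        * ((∏ p ∈ ((S.filter (¬ · ≤ s)).filter (¬ · ≤ 2*a/3)).filter (· ≤ a), f p)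
          * (∏ p ∈ ((S.filter (¬ · ≤ s)).filter (¬ · ≤ 2*a/3)).filter (¬ · ≤ a), f p))) := by
        rw [split3, split2, split1]
    _ ≤ (2*a) ^ (Nat.count Nat.Prime (s + 1)) * (4 ^ (2*a/3)
        * (1 * ((2*a) ^ (Nat.count Nat.Prime (2*a+1) - Nat.count Nat.Prime (a+1))))) := by
        exact Nat.mul_le_mul hP1 (Nat.mul_le_mul hP2 (Nat.mul_le_mul hP3.le hP4))
    _ = (2*a) ^ (Nat.count Nat.Prime (s + 1)) * 4 ^ (2*a/3)
        * (2*a) ^ (Nat.count Nat.Prime (2*a+1) - Nat.count Nat.Prime (a+1)) := by ring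


lemma erdos_count {a : ℕ} (ha : 4 ≤ a) :
    2*a ≤ 3 * ((Nat.sqrt (2*a)/2 + (Nat.count Nat.Prime (2*a+1) - Nat.count Nat.Prime (a+1)) + 2)
      * Nat.clog 2 (2*a)) := by
  set s := Nat.sqrt (2*a) with hs
  set L := Nat.clog 2 (2*a) with hL
  set C := Nat.count Nat.Prime (2*a+1) - Nat.count Nat.Prime (a+1) with hC
  have H2 : 4^a < a * Nat.centralBinom a := Nat.four_pow_lt_mul_centralBinom a ha
  have H3 := centralBinom_le a (by omega)
  have hc1 : Nat.count Nat.Prime (s+1) ≤ s/2 + 1 := by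
    have := count_le_half (s+1); omega
  have key : 4^a < (2*a)^(s/2 + C + 2) * 4^(2*a/3) := by
    calc 4^a < a * Nat.centralBinom a := H2
      _ ≤ a * ((2*a) ^ (Nat.count Nat.Prime (s+1)) * 4 ^ (2*a/3) * (2*a) ^ C) :=
          Nat.mul_le_mul_left a H3
      _ ≤ (2*a) * ((2*a) ^ (s/2+1) * 4 ^ (2*a/3) * (2*a) ^ C) := by
          refine Nat.mul_le_mul (by omega) (Nat.mul_le_mul_right _ (Nat.mul_le_mul_right _ ?_))
          exact Nat.pow_le_pow_right (by omega) hc1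
      _ = (2*a)^(s/2 + C + 2) * 4^(2*a/3) := by ring
  have key2 : 4^(a - 2*a/3) < (2*a)^(s/2+C+2) := by
    have hsplit : 4^a = 4^(a - 2*a/3) * 4^(2*a/3) := by
      rw [← pow_add]; congr 1; omega
    rw [hsplit] at key
    exact Nat.lt_of_mul_lt_mul_right key
  have key3 : (2*a)^(s/2+C+2) ≤ 2^(L*(s/2+C+2)) := by
    rw [pow_mul]
    exact Nat.pow_le_pow_left (Nat.le_pow_clog one_lt_two _) _
  have key4 : 2^(2*(a - 2*a/3)) < 2^(L*(s/2+C+2)) := by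
    calc 2^(2*(a-2*a/3)) = 4^(a-2*a/3) := by rw [pow_mul]; norm_num
      _ < (2*a)^(s/2+C+2) := key2
      _ ≤ 2^(L*(s/2+C+2)) := key3
  have key5 : 2*(a - 2*a/3) < L*(s/2+C+2) := by
    exact (Nat.pow_lt_pow_iff_right one_lt_two).mp key4
  have : L*(s/2+C+2) = (s/2+C+2)*L := Nat.mul_comm _ _
  omega

lemma aux9 : ∀ j : ℕ, 6 ≤ j → 9*(2*j+3) ≤ 2^(j+2) := by
  intro j hj
  induction j, hj using Nat.le_induction with
  | base => norm_num
  | succ j hj ih =>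
    have h2 : (18:ℕ) ≤ 2^(j+2) := le_trans (show (18:ℕ) ≤ 2^5 by norm_num)
      (Nat.pow_le_pow_right (by norm_num) (by omega))
    calc 9*(2*(j+1)+3) = 9*(2*j+3) + 18 := by ring
      _ ≤ 2^(j+2) + 2^(j+2) := Nat.add_le_add ih h2
      _ = 2^(j+1+2) := by ring

lemma aux18 : ∀ t : ℕ, 12 ≤ t → 18*t ≤ 2^(t-1) := by
  intro t ht
  induction t, ht using Nat.le_induction with
  | base => norm_num
  | succ t ht ih =>
    have h2 : (18:ℕ) ≤ 2^(t-1) := le_trans (show (18:ℕ) ≤ 2^5 by norm_num)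
      (Nat.pow_le_pow_right (by norm_num) (by omega))
    have hsp : 2^(t+1-1) = 2^(t-1) + 2^(t-1) := by
      rw [show t+1-1 = (t-1)+1 by omega]; ring
    calc 18*(t+1) = 18*t + 18 := by ring
      _ ≤ 2^(t-1) + 2^(t-1) := Nat.add_le_add ih h2
      _ = 2^(t+1-1) := hsp.symm

lemma caseB {x y : ℕ} (hx : x.Prime) (hy : y.Prime) (h3 : 3 ≤ x) (hxy : x ≤ y)
    (hy' : 2053 ≤ y) :
    Nat.count Nat.Prime (x+1) + Nat.count Nat.Prime (y+1) ≤ Nat.count Nat.Prime (x*y+1) := by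
  have hox : Odd x := hx.odd_of_ne_two (by omega)
  have hoy : Odd y := hy.odd_of_ne_two (by omega)
  obtain ⟨a, ha⟩ : Odd (x*y) := hox.mul hoy
  -- ha : x*y = 2*a+1
  have hxy3 : 3*y ≤ x*y := Nat.mul_le_mul_right y h3
  have hym : y*y ≥ x*y := Nat.mul_le_mul_right y hxy
  have ha4 : 512 ≤ a := by nlinarith
  set s := Nat.sqrt (2*a) with hs
  set L := Nat.clog 2 (2*a) with hLdef
  set C := Nat.count Nat.Prime (2*a+1) - Nat.count Nat.Prime (a+1) with hC
  have main := erdos_count (a := a) (by omega)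
  rw [← hs, ← hLdef, ← hC] at main
  -- basic clog facts
  set u := Nat.clog 2 x with hu
  set t := Nat.clog 2 y with ht
  have hu2 : 2 ≤ u := by
    rw [hu]
    have : (2:ℕ)^1 < x := by omega
    have := (Nat.lt_clog_iff_pow_lt (by norm_num)).mpr this
    omega
  have ht12 : 12 ≤ t := by
    rw [ht]
    have : (2:ℕ)^11 < y := by norm_num; omega
    have := (Nat.lt_clog_iff_pow_lt (by norm_num)).mpr this
    omega
  have hut : u ≤ t := Nat.clog_mono_right 2 hxy
  have hxu : x ≤ 2^u := Nat.le_pow_clog (by norm_num) x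
  have hyt : y ≤ 2^t := Nat.le_pow_clog (by norm_num) y
  have hxu' : 2^(u-1) < x := Nat.pow_pred_clog_lt_self (by norm_num) (by omega)
  have hyt' : 2^(t-1) < y := Nat.pow_pred_clog_lt_self (by norm_num) (by omega)
  have hLut : L ≤ u + t := by
    rw [hLdef]
    have h1 : 2*a ≤ 2^(u+t) := by
      calc 2*a ≤ x*y := by omega
        _ ≤ 2^u * 2^t := Nat.mul_le_mul hxu hyt
        _ = 2^(u+t) := (pow_add 2 u t).symm
    exact (Nat.clog_le_iff_le_pow (by norm_num)).mpr h1
  have hL2t : L ≤ 2*t := by omega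
  -- lower bound on 2a
  have h2alow : 2^(u+t-2) ≤ 2*a := by
    have hmul : 2^(u+t-2) < x*y := by
      calc 2^(u+t-2) = 2^(u-1) * 2^(t-1) := by rw [← pow_add]; congr 1; omega
        _ < x * y := Nat.mul_lt_mul'' hxu' hyt'
    omega
  -- s lower bound
  have hslow : 2^((u+t-2)/2) ≤ s := by
    rw [hs]
    have h1 : 2^((u+t-2)/2) * 2^((u+t-2)/2) ≤ 2*a := by
      calc 2^((u+t-2)/2) * 2^((u+t-2)/2) = 2^((u+t-2)/2 + (u+t-2)/2) := (pow_add _ _ _).symm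
        _ ≤ 2^(u+t-2) := Nat.pow_le_pow_right (by norm_num) (by omega)
        _ ≤ 2*a := h2alow
    exact Nat.le_sqrt.mpr h1
  -- Claim A : 9L ≤ 4s
  have hA : 9*L ≤ 4*s := by
    set j := (u+t-2)/2 with hj
    have hj6 : 6 ≤ j := by omega
    have h1 : 9*(2*j+3) ≤ 2^(j+2) := aux9 j hj6
    have h2 : u + t ≤ 2*j+3 := by omega
    have h3' : (2:ℕ)^(j+2) = 4 * 2^j := by ring
    have h4 : 4*(2^j) ≤ 4*s := by omega
    calc 9*L ≤ 9*(u+t) := by omega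
      _ ≤ 9*(2*j+3) := by omega
      _ ≤ 2^(j+2) := h1
      _ = 4*2^j := h3'
      _ ≤ 4*s := h4
  -- Claim B : 9L + 1 ≤ y
  have hB : 9*L + 1 ≤ y := by
    have h1 : 18*t ≤ 2^(t-1) := aux18 t ht12
    omega
  -- count facts
  have hcx : Nat.count Nat.Prime (x+1) ≤ (x+1)/2 := by
    obtain ⟨r, hr⟩ := hox
    have := count_le_half (x+1); omega
  have hay : y + 1 ≤ a + 1 := by nlinarith
  have hmono1 := Nat.count_monotone Nat.Prime hay
  have hmono2 := Nat.count_monotone Nat.Prime (show a+1 ≤ 2*a+1 by omega)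
  have hmono3 := Nat.count_monotone Nat.Prime (show 2*a+1 ≤ x*y+1 by omega)
  -- key: (x+1)/2 ≤ C
  have hkey : (x+1)/2 ≤ C := by
    by_contra hcon
    push_neg at hcon
    -- C + 2 ≤ (x+1)/2 + 1
    have hb1 : 9*L*(s/2) ≤ 4*a := by
      have h1 : 9*L*(s/2) ≤ 4*s*(s/2) := Nat.mul_le_mul_right _ hA
      have h2 : s*(s/2) ≤ s*s/2 := Nat.mul_div_le_mul_div_assoc s s 2
      have h3' : s*s ≤ 2*a := by
        have h := Nat.sqrt_le' (2*a); rwa [pow_two] at h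
      have h4 : 4*s*(s/2) = 4*(s*(s/2)) := by ring
      have h5 : 4*(s*s/2) ≤ 2*(s*s) := by omega
      omega
    have hb2 : 9*L*(C+2) ≤ 9*L*x := by
      have : C + 2 ≤ x := by omega
      exact Nat.mul_le_mul_left _ this
    have hb3 : 9*L*x < 2*a := by
      have h1 : 9*L*x ≤ (y-1)*x := Nat.mul_le_mul_right x (by omega)
      have h2 : (y-1)*x = x*y - x := by
        rw [Nat.sub_mul, one_mul, Nat.mul_comm]
      omega
    have hfin : 6*a ≤ 9*L*(s/2) + 9*L*(C+2) := by
      have h9 : 9*((s/2 + C + 2)*L) = 9*L*(s/2) + 9*L*(C+2) := by ring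
      omega
    omega
  -- assemble
  omega

end Ishikawa

open Ishikawa in
theorem stmt_7 (n m : ℕ) (hn : 1 ≤ n) (hnm : n ≤ m) (hm : 2 ≤ m) :
    Nat.nth Nat.Prime (n - 1) * Nat.nth Nat.Prime (m - 1) ≥
      Nat.nth Nat.Prime (n + m - 1) := by
  have hinf := Nat.infinite_setOf_prime
  set x := Nat.nth Nat.Prime (n-1) with hxdef
  set y := Nat.nth Nat.Prime (m-1) with hydef
  have hx : x.Prime := Nat.prime_nth_prime _
  have hy : y.Prime := Nat.prime_nth_prime _
  have hypos := hy.pos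
  have hxy : x ≤ y := (Nat.nth_le_nth hinf).mpr (by omega)
  have hcx : Nat.count Nat.Prime (x+1) = n := by
    rw [hxdef, Nat.count_nth_succ_of_infinite hinf]; omega
  have hcy : Nat.count Nat.Prime (y+1) = m := by
    rw [hydef, Nat.count_nth_succ_of_infinite hinf]; omega
  suffices hsuff : n + m ≤ Nat.count Nat.Prime (x*y+1) by
    have h1 : n+m-1 < Nat.count Nat.Prime (x*y+1) := by omega
    have h2 := Nat.nth_lt_of_lt_count h1
    exact Nat.lt_succ_iff.mp h2
  rcases Nat.eq_or_lt_of_le hn with h1 | h1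
  · -- n = 1
    have hx2 : x = 2 := by
      rw [hxdef, show n - 1 = 0 by omega]
      exact Nat.nth_prime_zero_eq_two
    obtain ⟨p, pp, hp1, hp2⟩ := Nat.exists_prime_lt_and_le_two_mul y (by omega)
    have e1 := Nat.count_monotone Nat.Prime (show p+1 ≤ 2*y+1 by omega)
    have e2 : Nat.count Nat.Prime (p+1) = Nat.count Nat.Prime p + 1 := by
      rw [Nat.count_succ, if_pos pp]
    have e3 := Nat.count_monotone Nat.Prime (show y+1 ≤ p by omega)
    rw [hx2]
    omega
  · -- 2 ≤ n
    have hx3 : 3 ≤ x := by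
      have h3 : Nat.nth Nat.Prime 1 ≤ x := by
        rw [hxdef]; exact (Nat.nth_le_nth hinf).mpr (by omega)
      rw [Nat.nth_prime_one_eq_three] at h3; exact h3
    have hy3 : 3 ≤ y := le_trans hx3 hxy
    rcases le_or_gt y 2052 with hsmall | hbig
    · have hf := finite_case y hy3 hsmall
      have h1 := Nat.count_monotone Nat.Prime (show 3*y+1 ≤ x*y+1 by
        have := Nat.mul_le_mul_right y hx3; omega)
      omega
    · have := caseB hx hy hx3 hxy (by omega)
      omega
end

section
/- Let $\lambda = (1+\sqrt{5})/2$ and let $q \ge 12$ be an integer. With $s = 1.0571/(q \ln 2)$, we have $\lambda^{-2s} + (2^q + \lambda - 1)^{-2s} > 1$. -/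
/-!
With `D = q log 2` and `t = 2s = 2.1142 / D`, both terms are exponentials:
`λ^(-t) = exp (-t log λ)` and `(2^q + λ - 1)^(-t) = exp (-t log (2^q + λ - 1))`.
Since `D ≥ 12 log 2`, the first exponent is at most `0.2542 · log λ < 0.1226`, while
`log (2^q + λ - 1) ≤ D + 2^(-12)` makes the second exponent at most `2.1142 + 2^(-12)`.
Hence the terms exceed `0.8811` and `0.1198` respectively.
-/

open Real
open scoped goldenRatio

namespace Real

lemma one_sub_half_sq_le_exp_neg {x : ℝ} (hx : x ≤ 2) : (1 - x / 2) ^ 2 ≤ exp (-x) := by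
  have h : 1 - x / 2 ≤ exp (-(x / 2)) := by linarith [add_one_le_exp (-(x / 2))]
  calc (1 - x / 2) ^ 2 ≤ exp (-(x / 2)) ^ 2 := pow_le_pow_left₀ (by linarith) h 2
    _ = exp (-x) := by rw [← exp_nat_mul]; ring_nf

lemma log_add_le_log_add_div {x a : ℝ} (hx : 0 < x) (hxa : 0 < x + a) :
    log (x + a) ≤ log x + a / x := by
  have h := log_le_sub_one_of_pos (div_pos hxa hx)
  rw [log_div hxa.ne' hx.ne', add_div, div_self hx.ne'] at h
  linarith

lemma exp_neg_le_rpow_neg {a t b : ℝ} (ha : 0 < a) (h : t * log a ≤ b) :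
    exp (-b) ≤ a ^ (-t) := by
  rw [rpow_def_of_pos ha, exp_le_exp]
  linarith

lemma log_goldenRatio_lt : log φ < 0.482 := by
  have hsqrt : √5 < 2.2362 := (sqrt_lt' (by norm_num)).2 (by norm_num)
  rw [log_lt_iff_lt_exp goldenRatio_pos]
  calc φ < ∑ i ∈ Finset.range 5, (0.482 : ℝ) ^ i / i.factorial := by
        simp only [goldenRatio, Finset.sum_range_succ, Finset.sum_range_zero, Nat.factorial]
        norm_num
        linarith
    _ ≤ exp 0.482 := sum_le_exp_of_nonneg (by norm_num) 5

lemma exp_neg_2_1145_gt : 0.1198 < exp (-2.1145) := by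
  have hsplit : exp (-2.1145) = exp (-1) * exp (-1) * exp (-0.1145) := by
    rw [← exp_add, ← exp_add]; norm_num
  have hsmall : 1 - 0.1145 ≤ exp (-0.1145) := by linarith [add_one_le_exp (-0.1145)]
  rw [hsplit]
  nlinarith [exp_neg_one_gt_d9, exp_pos (-1)]

end Real

lemma goldenRatio_rpow_neg_gt {t : ℝ} (ht : t ≤ 0.2542) : 0.8811 < φ ^ (-t) := by
  have hlog : t * log φ ≤ 0.1226 := by
    nlinarith [log_goldenRatio_lt, log_nonneg one_lt_goldenRatio.le]
  calc (0.8811 : ℝ) < (1 - 0.1226 / 2) ^ 2 := by norm_num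
    _ ≤ exp (-0.1226) := one_sub_half_sq_le_exp_neg (by norm_num)
    _ ≤ φ ^ (-t) := exp_neg_le_rpow_neg goldenRatio_pos hlog

lemma two_pow_add_goldenRatio_sub_one_rpow_neg_gt {q : ℕ} {t : ℝ} (hq : 12 ≤ q) (ht₀ : 0 ≤ t)
    (ht₁ : t ≤ 1) (htq : t * (q * log 2) ≤ 2.1142) :
    0.1198 < ((2 : ℝ) ^ q + φ - 1) ^ (-t) := by
  have h2q : (4096 : ℝ) ≤ 2 ^ q := by
    calc (4096 : ℝ) = 2 ^ 12 := by norm_num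
      _ ≤ 2 ^ q := pow_le_pow_right₀ (by norm_num) hq
  have hφ := one_lt_goldenRatio
  have hlog : log ((2 : ℝ) ^ q + φ - 1) ≤ q * log 2 + 1 / 4096 := by
    rw [add_sub_assoc]
    calc log ((2 : ℝ) ^ q + (φ - 1)) ≤ log (2 ^ q) + (φ - 1) / 2 ^ q :=
          log_add_le_log_add_div (by positivity) (by linarith)
      _ ≤ q * log 2 + 1 / 4096 := by
          rw [log_pow]
          gcongr
          linarith [goldenRatio_lt_two]
  calc (0.1198 : ℝ) < exp (-2.1145) := exp_neg_2_1145_gt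
    _ ≤ ((2 : ℝ) ^ q + φ - 1) ^ (-t) :=
        exp_neg_le_rpow_neg (by linarith) (by nlinarith)

theorem stmt_11 (q : ℕ) (hq : 12 ≤ q) :
    let lam : ℝ := (1 + Real.sqrt 5) / 2
    let s : ℝ := 1.0571 / ((q : ℝ) * Real.log 2)
    lam ^ (-(2 * s)) + ((2 : ℝ) ^ q + lam - 1) ^ (-(2 * s)) > 1 := by
  intro lam s
  have hD : 8.3177 < (q : ℝ) * log 2 := by
    have : (12 : ℝ) ≤ q := by exact_mod_cast hq
    nlinarith [log_two_gt_d9]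
  have hts : 2 * s * ((q : ℝ) * log 2) = 2.1142 := by
    simp only [s]; field_simp; norm_num
  have ht₀ : 0 ≤ 2 * s := by positivity
  have ht : 2 * s ≤ 0.2542 := by nlinarith
  have h₁ : 0.8811 < lam ^ (-(2 * s)) := goldenRatio_rpow_neg_gt ht
  have h₂ : 0.1198 < ((2 : ℝ) ^ q + lam - 1) ^ (-(2 * s)) :=
    two_pow_add_goldenRatio_sub_one_rpow_neg_gt hq ht₀ (by linarith) hts.le
  linarith
end

section
/- The function $g(x) = \left(\frac{2x+1}{2x+2}\right)^{4\sqrt{x}}$ is monotone increasing on $[1,\infty)$. -/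
open Real

private lemma hD (x : ℝ) (hx : 1 < x) :
    HasDerivAt (fun x : ℝ => 4 * Real.sqrt x * (Real.log (2 * x + 1) - Real.log (2 * x + 2)))
      (4 * (1 / (2 * Real.sqrt x)) * (Real.log (2 * x + 1) - Real.log (2 * x + 2)) +
        4 * Real.sqrt x * (2 * (2 * x + 1)⁻¹ - 2 * (2 * x + 2)⁻¹)) x := by
  have hx0 : (0:ℝ) < x := by linarith
  have hs : HasDerivAt (fun x : ℝ => 4 * Real.sqrt x) (4 * (1 / (2 * Real.sqrt x))) x :=
    (Real.hasDerivAt_sqrt hx0.ne').const_mul 4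
  have hlin1 : HasDerivAt (fun x : ℝ => 2 * x + 1) 2 x := by
    simpa using ((hasDerivAt_id x).const_mul 2).add_const 1
  have hlin2 : HasDerivAt (fun x : ℝ => 2 * x + 2) 2 x := by
    simpa using ((hasDerivAt_id x).const_mul 2).add_const 2
  have h1 : HasDerivAt (fun x : ℝ => Real.log (2 * x + 1)) ((2 * x + 1)⁻¹ * 2) x :=
    (Real.hasDerivAt_log (by linarith)).comp x hlin1
  have h2 : HasDerivAt (fun x : ℝ => Real.log (2 * x + 2)) ((2 * x + 2)⁻¹ * 2) x :=
    (Real.hasDerivAt_log (by linarith)).comp x hlin2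
  have := hs.mul (h1.sub h2)
  refine this.congr_deriv ?_
  simp only [Pi.sub_apply]
  ring

private lemma hmono :
    MonotoneOn (fun x : ℝ => 4 * Real.sqrt x * (Real.log (2 * x + 1) - Real.log (2 * x + 2)))
      (Set.Ici (1:ℝ)) := by
  apply monotoneOn_of_deriv_nonneg (convex_Ici 1)
  · apply ContinuousOn.mul
    · exact (continuous_const.mul Real.continuous_sqrt).continuousOn
    · apply ContinuousOn.sub
      · apply ContinuousOn.log
        · fun_prop
        · intro x hx; simp only [Set.mem_Ici] at hx; intro h; linarith
      · apply ContinuousOn.log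
        · fun_prop
        · intro x hx; simp only [Set.mem_Ici] at hx; intro h; linarith
  · intro x hx
    rw [interior_Ici] at hx
    exact (hD x hx).differentiableAt.differentiableWithinAt
  · intro x hx
    rw [interior_Ici] at hx
    rw [(hD x hx).deriv]
    have hx1 : (1:ℝ) < x := hx
    have hx0 : (0:ℝ) < x := by linarith
    set s := Real.sqrt x with hsdef
    have hs0 : 0 < s := Real.sqrt_pos.mpr hx0
    have hs2 : s * s = x := Real.mul_self_sqrt hx0.le
    have hp : (0:ℝ) < 2 * x + 1 := by linarith
    have hq : (0:ℝ) < 2 * x + 2 := by linarith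
    -- log bound
    have hlog : Real.log (2 * x + 2) - Real.log (2 * x + 1) ≤ 1 / (2 * x + 1) := by
      have h := Real.log_le_sub_one_of_pos (x := (2 * x + 2) / (2 * x + 1)) (by positivity)
      rw [Real.log_div hq.ne' hp.ne'] at h
      have : (2 * x + 2) / (2 * x + 1) - 1 = 1 / (2 * x + 1) := by field_simp; ring
      rw [this] at h; exact h
    have key1 : 0 ≤ 4 * (1 / (2 * s)) * (Real.log (2 * x + 1) - Real.log (2 * x + 2)) +
        (2 / s) * (1 / (2 * x + 1)) := by
      have : 4 * (1 / (2 * s)) * (Real.log (2 * x + 1) - Real.log (2 * x + 2)) +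
          (2 / s) * (1 / (2 * x + 1)) =
          (2 / s) * (1 / (2 * x + 1) - (Real.log (2 * x + 2) - Real.log (2 * x + 1))) := by
        field_simp; ring
      rw [this]
      exact mul_nonneg (by positivity) (by linarith)
    have key2 : (2 / s) * (1 / (2 * x + 1)) ≤ 4 * s * (2 * (2 * x + 1)⁻¹ - 2 * (2 * x + 2)⁻¹) := by
      have hrhs : 4 * s * (2 * (2 * x + 1)⁻¹ - 2 * (2 * x + 2)⁻¹) =
          8 * s / ((2 * x + 1) * (2 * x + 2)) := by
        field_simp; ring
      have hlhs : (2 / s) * (1 / (2 * x + 1)) = 2 / (s * (2 * x + 1)) := by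
        field_simp
      rw [hrhs, hlhs, div_le_div_iff₀ (by positivity) (by positivity)]
      nlinarith [hs2, mul_nonneg hp.le (sub_nonneg.mpr hx1.le)]
    linarith

theorem stmt_12 :
    MonotoneOn (fun x : ℝ => ((2 * x + 1) / (2 * x + 2)) ^ (4 * Real.sqrt x))
      (Set.Ici (1:ℝ)) := by
  have heq : ∀ x ∈ Set.Ici (1:ℝ),
      ((2 * x + 1) / (2 * x + 2)) ^ (4 * Real.sqrt x) =
        Real.exp (4 * Real.sqrt x * (Real.log (2 * x + 1) - Real.log (2 * x + 2))) := by
    intro x hx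
    simp only [Set.mem_Ici] at hx
    have hp : (0:ℝ) < 2 * x + 1 := by linarith
    have hq : (0:ℝ) < 2 * x + 2 := by linarith
    rw [Real.rpow_def_of_pos (by positivity), Real.log_div hp.ne' hq.ne', mul_comm]
  intro a ha b hb hab
  simp only
  rw [heq a ha, heq b hb]
  exact Real.exp_le_exp.mpr (hmono ha hb hab)
end

section
/- For all real $x \ge 11$, $\tau(x) := \left(\frac{2x+1}{2x+2}\right)^{4\sqrt{x}} \cdot \frac{2x+2}{4\sqrt{x}-1} \ge 1.112 > 1$. -/
/-! Write `s = √x`, so that the first factor is `(1 - u) ^ (4 s)` with `u = 1 / (2 s² + 2)`.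
Bernoulli's inequality applied with the exponent `4 s / 13 ≥ 1` and then raised to the
13th power bounds it below by `(1 - 4 s u / 13) ^ 13`; since `4 s / 13` is close to `1` at
`x = 11`, this loses almost nothing. Both resulting factors are increasing in `s`, so it
suffices to evaluate them at the rational lower bound `3.3166` of `√11`. -/

open Set

lemma one_sub_mul_div_pow_le_rpow {u t : ℝ} {n : ℕ} (hn : n ≠ 0) (hu : u ≤ 1)
    (hnt : (n : ℝ) ≤ t) (htu : t * u ≤ n) :
    (1 - t * u / n) ^ n ≤ (1 - u) ^ t := by
  have hn₀ : (0 : ℝ) < n := by exact_mod_cast Nat.pos_of_ne_zero hn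
  have hbernoulli : 1 + t / n * -u ≤ (1 + -u) ^ (t / n) :=
    one_add_mul_self_le_rpow_one_add (by linarith) ((one_le_div hn₀).2 hnt)
  have hbase : 0 ≤ 1 + t / n * -u := by
    rw [div_mul_eq_mul_div, mul_neg, neg_div, ← sub_eq_add_neg, sub_nonneg]
    exact (div_le_one hn₀).2 htu
  calc (1 - t * u / n) ^ n = (1 + t / n * -u) ^ n := by ring
    _ ≤ ((1 + -u) ^ (t / n)) ^ n := pow_le_pow_left₀ hbase hbernoulli n
    _ = (1 - u) ^ t := by
      rw [← Real.rpow_natCast, ← Real.rpow_mul (by linarith), div_mul_cancel₀ t hn₀.ne',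
        ← sub_eq_add_neg]

lemma antitoneOn_div_sq_add_one : AntitoneOn (fun s : ℝ => s / (s ^ 2 + 1)) (Ici 1) := by
  intro a (ha : 1 ≤ a) s (hs : 1 ≤ s) has
  rw [div_le_div_iff₀ (by positivity) (by positivity)]
  nlinarith [mul_nonneg (sub_nonneg.2 has) (show 0 ≤ a * s - 1 by nlinarith)]

lemma monotoneOn_two_mul_sq_add_two_div :
    MonotoneOn (fun s : ℝ => (2 * s ^ 2 + 2) / (4 * s - 1)) (Ici 2) := by
  intro a (ha : 2 ≤ a) s (hs : 2 ≤ s) has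
  rw [div_le_div_iff₀ (by linarith) (by linarith)]
  nlinarith [mul_nonneg (sub_nonneg.2 has) (show 0 ≤ 8 * a * s - 2 * (a + s) - 8 by nlinarith)]

lemma one_sub_div_pow_mul_div_le_rpow_mul_div {a s : ℝ} (ha : 13 / 4 ≤ a) (has : a ≤ s) :
    (1 - 2 * a / (13 * (a ^ 2 + 1))) ^ 13 * ((2 * a ^ 2 + 2) / (4 * a - 1))
      ≤ ((2 * s ^ 2 + 1) / (2 * s ^ 2 + 2)) ^ (4 * s) * ((2 * s ^ 2 + 2) / (4 * s - 1)) := by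
  have hs₀ : 0 < 2 * s ^ 2 + 2 := by positivity
  have hslope : s / (s ^ 2 + 1) ≤ a / (a ^ 2 + 1) :=
    antitoneOn_div_sq_add_one (mem_Ici.2 (by linarith)) (mem_Ici.2 (by linarith)) has
  have hfirst : (1 - 2 * a / (13 * (a ^ 2 + 1))) ^ 13
      ≤ ((2 * s ^ 2 + 1) / (2 * s ^ 2 + 2)) ^ (4 * s) := by
    have hbase : (2 * s ^ 2 + 1) / (2 * s ^ 2 + 2) = 1 - 1 / (2 * s ^ 2 + 2) := by
      field_simp; ring
    have hterm : 4 * s * (1 / (2 * s ^ 2 + 2)) / (13 : ℕ) = 2 / 13 * (s / (s ^ 2 + 1)) := by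
      push_cast; field_simp; ring
    have hterm_a : 2 * a / (13 * (a ^ 2 + 1)) = 2 / 13 * (a / (a ^ 2 + 1)) := by
      field_simp
    have hbase_a : 0 ≤ 1 - 2 * a / (13 * (a ^ 2 + 1)) := by
      rw [sub_nonneg, div_le_one (by positivity)]; nlinarith
    calc (1 - 2 * a / (13 * (a ^ 2 + 1))) ^ 13
        ≤ (1 - 4 * s * (1 / (2 * s ^ 2 + 2)) / (13 : ℕ)) ^ 13 := by
          refine pow_le_pow_left₀ hbase_a ?_ 13
          rw [hterm, hterm_a]
          linarith
      _ ≤ (1 - 1 / (2 * s ^ 2 + 2)) ^ (4 * s) := by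
          refine one_sub_mul_div_pow_le_rpow (by norm_num) ?_ (by push_cast; linarith) ?_
          · rw [div_le_one hs₀]; nlinarith
          · rw [mul_one_div, div_le_iff₀ hs₀]; push_cast; nlinarith
      _ = _ := by rw [hbase]
  have hsecond : (2 * a ^ 2 + 2) / (4 * a - 1) ≤ (2 * s ^ 2 + 2) / (4 * s - 1) :=
    monotoneOn_two_mul_sq_add_two_div (mem_Ici.2 (by linarith)) (mem_Ici.2 (by linarith)) has
  exact mul_le_mul hfirst hsecond (div_nonneg (by positivity) (by linarith))
    (Real.rpow_nonneg (div_nonneg (by positivity) hs₀.le) _)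

theorem stmt_13 (x : ℝ) (hx : 11 ≤ x) :
    ((2 * x + 1) / (2 * x + 2)) ^ (4 * Real.sqrt x) * ((2 * x + 2) / (4 * Real.sqrt x - 1))
      ≥ 1.112 ∧ (1.112 : ℝ) > 1 := by
  have hsqrt : (3.3166 : ℝ) ≤ Real.sqrt x := Real.le_sqrt_of_sq_le (by norm_num; linarith)
  have hnum : (1.112 : ℝ) ≤ (1 - 2 * 3.3166 / (13 * (3.3166 ^ 2 + 1))) ^ 13
      * ((2 * 3.3166 ^ 2 + 2) / (4 * 3.3166 - 1)) := by norm_num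
  have h := one_sub_div_pow_mul_div_le_rpow_mul_div (by norm_num) hsqrt
  rw [Real.sq_sqrt (by linarith)] at h
  exact ⟨hnum.trans h, by norm_num⟩
end

section
/- Let $\lambda = (1+\sqrt{5})/2$, let $q \ge 11$ be an integer, and set $s = 2/\sqrt{q}$. Then $\lambda^{-2s} + \left(\frac{\lambda}{2^q}\right)^{2s}\left(1 + \frac{2}{2qs - 1}\right) < 1$. -/
open Real

set_option maxHeartbeats 1000000 in
theorem stmt_16 (q : ℕ) (hq : 11 ≤ q) :
    let lam : ℝ := (1 + Real.sqrt 5) / 2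
    let s : ℝ := 2 / Real.sqrt q
    lam ^ (-(2 * s)) + (lam / (2 : ℝ) ^ q) ^ (2 * s) * (1 + 2 / (2 * (q : ℝ) * s - 1)) < 1 := by
  intro lam s
  set t : ℝ := Real.sqrt q with htdef
  have hq' : (11 : ℝ) ≤ (q : ℝ) := by exact_mod_cast hq
  have ht : (3.3 : ℝ) ≤ t := by
    rw [htdef, Real.le_sqrt (by norm_num) (by positivity)]
    nlinarith
  have ht0 : (0:ℝ) < t := by linarith
  have ht2 : t ^ 2 = (q : ℝ) := Real.sq_sqrt (by positivity)
  -- bounds on sqrt 5 and lam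
  have h5l : (2.2 : ℝ) ≤ Real.sqrt 5 := by
    rw [Real.le_sqrt (by norm_num) (by norm_num)]; norm_num
  have h5u : Real.sqrt 5 ≤ 2.24 := by
    rw [Real.sqrt_le_iff]; norm_num
  have hlaml : (1.6 : ℝ) ≤ lam := by simp only [lam]; linarith
  have hlamu : lam ≤ 1.62 := by simp only [lam]; linarith
  have hlam0 : (0:ℝ) < lam := by linarith
  -- log lam bounds
  have hlogu : Real.log lam ≤ 0.5 := by
    rw [Real.log_le_iff_le_exp hlam0]
    have he1 : (2.7182818283 : ℝ) < Real.exp 1 := Real.exp_one_gt_d9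
    have hsq : Real.exp 0.5 ^ 2 = Real.exp 1 := by
      rw [← Real.exp_nat_mul]; norm_num
    nlinarith [Real.exp_pos (0.5 : ℝ)]
  have hlogl : (0.4 : ℝ) ≤ Real.log lam := by
    rw [Real.le_log_iff_exp_le hlam0]
    have h1 : Real.exp 0.1 ≤ 10/9 := by
      have h9 : (0.9:ℝ) ≤ Real.exp (-0.1) := by
        have := Real.add_one_le_exp (-0.1 : ℝ); linarith
      have hmul : Real.exp 0.1 * Real.exp (-0.1) = 1 := by
        rw [← Real.exp_add]; norm_num
      nlinarith [Real.exp_pos (0.1:ℝ), Real.exp_pos (-0.1:ℝ)]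
    have h4 : Real.exp 0.4 = Real.exp 0.1 ^ 4 := by
      rw [← Real.exp_nat_mul]; norm_num
    have : Real.exp 0.4 ≤ (10/9:ℝ)^4 := by
      rw [h4]; exact pow_le_pow_left₀ (Real.exp_pos _).le h1 4
    calc Real.exp 0.4 ≤ (10/9:ℝ)^4 := this
      _ ≤ 1.6 := by norm_num
      _ ≤ lam := hlaml
  -- s and exponent
  have hs : s = 2 / t := rfl
  have h2s : 2 * s = 4 / t := by rw [hs]; ring
  have hqs : 2 * (q:ℝ) * s - 1 = 4 * t - 1 := by
    rw [hs, ← ht2]; field_simp; ring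
  -- first term
  set x : ℝ := (2 * s) * Real.log lam with hxdef
  have hA : lam ^ (-(2*s)) = Real.exp (-x) := by
    rw [Real.rpow_def_of_pos hlam0, hxdef]; ring_nf
  have hxl : 1.6 / t ≤ x := by
    rw [hxdef, h2s, div_mul_eq_mul_div]
    gcongr
    linarith
  have hxu : x ≤ 2 / t := by
    rw [hxdef, h2s, div_mul_eq_mul_div]
    gcongr
    linarith
  have hx0 : 0 < x := lt_of_lt_of_le (by positivity) hxl
  have hAle : lam ^ (-(2*s)) ≤ 1 / (1 + x) := by
    rw [hA, Real.exp_neg, one_div]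
    have := Real.add_one_le_exp x
    exact inv_anti₀ (by linarith) (by linarith)
  -- second term base bound
  have h2q : (0:ℝ) < (2:ℝ)^q := by positivity
  have hbase0 : 0 < lam / (2:ℝ)^q := by positivity
  have hbase : lam / (2:ℝ)^q ≤ (2:ℝ) ^ ((1:ℝ) - (q:ℝ)) := by
    rw [Real.rpow_sub two_pos, Real.rpow_one, Real.rpow_natCast]
    gcongr
    linarith
  have h2s0 : (0:ℝ) ≤ 2 * s := by rw [h2s]; positivity
  have hB1 : (lam / (2:ℝ)^q) ^ (2*s) ≤ ((2:ℝ) ^ ((1:ℝ) - (q:ℝ))) ^ (2*s) :=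
    Real.rpow_le_rpow hbase0.le hbase h2s0
  have hB2 : ((2:ℝ) ^ ((1:ℝ) - (q:ℝ))) ^ (2*s) = (2:ℝ) ^ (((1:ℝ) - (q:ℝ)) * (2*s)) :=
    (Real.rpow_mul (by norm_num) _ _).symm
  have hexp : ((1:ℝ) - (q:ℝ)) * (2*s) ≤ -(2*t) := by
    rw [h2s, ← ht2]
    have he : ((1:ℝ) - t^2) * (4/t) = (4 - 4*t^2)/t := by field_simp
    rw [he, div_le_iff₀ ht0]
    nlinarith
  have hB3 : (2:ℝ) ^ (((1:ℝ) - (q:ℝ)) * (2*s)) ≤ (2:ℝ) ^ (-(2*t)) :=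
    Real.rpow_le_rpow_of_exponent_le one_le_two hexp
  have hlog2 : (0.69:ℝ) ≤ Real.log 2 := by
    have := Real.log_two_gt_d9; norm_num at this ⊢; linarith
  have hBle : (2:ℝ) ^ (-(2*t)) ≤ 1 / (1 + 1.38*t) := by
    rw [Real.rpow_def_of_pos two_pos]
    have h1 : Real.log 2 * -(2*t) = -(2*t*Real.log 2) := by ring
    rw [h1, Real.exp_neg, one_div]
    have h2 : 1 + 1.38*t ≤ Real.exp (2*t*Real.log 2) := by
      have h0 := Real.add_one_le_exp (2*t*Real.log 2)
      have h3 := mul_le_mul_of_nonneg_left hlog2 (by linarith : (0:ℝ) ≤ 2*t)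
      linarith
    exact inv_anti₀ (by linarith) h2
  have hC : 1 + 2 / (2*(q:ℝ)*s - 1) ≤ 7/6 := by
    rw [hqs]
    have h12 : (12:ℝ) ≤ 4*t - 1 := by linarith
    have h2 : 2/(4*t-1) ≤ 2/12 := by gcongr
    linarith only [h2, h12]
  have hC0 : (0:ℝ) ≤ 1 + 2 / (2*(q:ℝ)*s - 1) := by
    rw [hqs]
    have : (0:ℝ) < 4*t - 1 := by linarith
    positivity
  have hBfin : (lam / (2:ℝ)^q) ^ (2*s) ≤ 1 / (1 + 1.38*t) :=
    ((hB1.trans_eq hB2).trans hB3).trans hBle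
  have hBC : (lam / (2:ℝ)^q) ^ (2*s) * (1 + 2 / (2*(q:ℝ)*s - 1)) ≤ (1/(1+1.38*t)) * (7/6) :=
    mul_le_mul hBfin hC hC0 (by positivity)
  have htx : (1.6:ℝ) ≤ x * t := by
    rw [div_le_iff₀ ht0] at hxl; exact hxl
  have hA2 : 1/(1+x) ≤ t/(t+1.6) := by
    rw [div_le_div_iff₀ (by linarith) (by linarith)]
    nlinarith
  have hfinal : t/(t+1.6) + (1/(1+1.38*t)) * (7/6) < 1 := by
    have e1 : (0:ℝ) < t + 1.6 := by linarith
    have e2 : (0:ℝ) < 1 + 1.38*t := by linarith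
    have h1 : t/(t+1.6) = 1 - 1.6/(t+1.6) := by field_simp; ring
    have h2 : (1/(1+1.38*t))*(7/6) < 1.6/(t+1.6) := by
      rw [mul_comm, mul_one_div, div_lt_div_iff₀ e2 e1]
      nlinarith
    rw [h1]
    linarith
  calc lam ^ (-(2*s)) + (lam / (2:ℝ)^q) ^ (2*s) * (1 + 2 / (2*(q:ℝ)*s - 1))
      ≤ 1/(1+x) + (1/(1+1.38*t)) * (7/6) := add_le_add hAle hBC
    _ ≤ t/(t+1.6) + (1/(1+1.38*t)) * (7/6) := by linarith
    _ < 1 := hfinal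
end

section
/- The function $h(x) = \lambda^{-4/\sqrt{x}} + \left(\frac{\lambda}{2^x}\right)^{4/\sqrt{x}}\left(1 + \frac{2}{4\sqrt{x}-1}\right)$, where $\lambda = (1+\sqrt{5})/2$, is strictly increasing on $[11,\infty)$ and tends to $1$ as $x \to \infty$; consequently $h(x) < 1$ for all $x \ge 11$. -/
open Real Filter

noncomputable def Lc : ℝ := Real.log ((1 + Real.sqrt 5) / 2)

noncomputable def Fc : ℝ → ℝ := fun u =>
  Real.exp (-(4 * Lc) / u) +
    Real.exp (4 * Lc / u - 4 * Real.log 2 * u) * ((4 * u + 1) / (4 * u - 1))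

lemma sqrt5_lb : (2.236 : ℝ) < Real.sqrt 5 := by
  have h := Real.sq_sqrt (by norm_num : (5:ℝ) ≥ 0)
  nlinarith [Real.sqrt_nonneg 5]

lemma sqrt5_ub : Real.sqrt 5 < 2.2361 := by
  have h := Real.sq_sqrt (by norm_num : (5:ℝ) ≥ 0)
  nlinarith [Real.sqrt_nonneg 5]

lemma lam_pos : (0:ℝ) < (1 + Real.sqrt 5) / 2 := by nlinarith [sqrt5_lb]

lemma Lc_lb : (0.38 : ℝ) ≤ Lc := by
  have h1 : (0:ℝ) < (1 + Real.sqrt 5) / 2 := lam_pos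
  have h2 := Real.log_le_sub_one_of_pos (x := ((1 + Real.sqrt 5) / 2)⁻¹) (by positivity)
  rw [Real.log_inv] at h2
  have h3 : ((1 + Real.sqrt 5) / 2)⁻¹ ≤ 0.6181 := by
    rw [inv_le_comm₀ (by positivity) (by norm_num)]
    nlinarith [sqrt5_lb]
  unfold Lc
  nlinarith

lemma Lc_ub : Lc ≤ 0.62 := by
  have h2 := Real.log_le_sub_one_of_pos lam_pos
  unfold Lc
  nlinarith [sqrt5_ub]

noncomputable def Dc : ℝ → ℝ := fun u =>
  Real.exp (-(4 * Lc) / u) * (4 * Lc / u ^ 2) +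
    (Real.exp (4 * Lc / u - 4 * Real.log 2 * u) * (-(4 * Lc) / u ^ 2 - 4 * Real.log 2) *
        ((4 * u + 1) / (4 * u - 1)) +
      Real.exp (4 * Lc / u - 4 * Real.log 2 * u) * (-8 / (4 * u - 1) ^ 2))

lemma Fc_hasDerivAt {u : ℝ} (hu : 3 ≤ u) : HasDerivAt Fc (Dc u) u := by
  have hu0 : u ≠ 0 := by linarith
  have hd : (4 * u - 1) ≠ 0 := by linarith
  have h1 : HasDerivAt (fun u : ℝ => -(4 * Lc) / u) (4 * Lc / u ^ 2) u := by
    have := (hasDerivAt_inv hu0).const_mul (-(4 * Lc))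
    refine this.congr_deriv ?_
    field_simp
  have h2 := h1.exp
  have h3 : HasDerivAt (fun u : ℝ => 4 * Lc / u - 4 * Real.log 2 * u)
      (-(4 * Lc) / u ^ 2 - 4 * Real.log 2) u := by
    have ha := ((hasDerivAt_inv hu0).const_mul (4 * Lc)).sub
      ((hasDerivAt_id u).const_mul (4 * Real.log 2))
    refine ha.congr_deriv ?_
    field_simp
  have h4 := h3.exp
  have h5 : HasDerivAt (fun u : ℝ => (4 * u + 1) / (4 * u - 1)) (-8 / (4 * u - 1) ^ 2) u := by
    have hn : HasDerivAt (fun u : ℝ => 4 * u + 1) 4 u := by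
      simpa using ((hasDerivAt_id u).const_mul (4:ℝ)).add_const 1
    have hm : HasDerivAt (fun u : ℝ => 4 * u - 1) 4 u := by
      simpa using ((hasDerivAt_id u).const_mul (4:ℝ)).sub_const 1
    have := hn.div hm hd
    refine this.congr_deriv ?_
    field_simp; ring
  have h6 := h4.mul h5
  have := h2.add h6
  refine this.congr_deriv ?_
  all_goals unfold Dc; try ring

lemma exp_key' {s : ℝ} (hs0 : 8.42 ≤ s) : (1.2 * s + 1) ^ 2 ≤ Real.exp s := by
  have hsn : (0:ℝ) ≤ s := by linarith
  have h8 : Real.exp s = Real.exp (s / 8) ^ 8 := by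
    rw [← Real.exp_nat_mul]; congr 1; push_cast; ring
  have hb : 1 + s / 8 ≤ Real.exp (s / 8) := by
    have := Real.add_one_le_exp (s / 8); linarith
  have hpos : (0:ℝ) ≤ 1 + s / 8 := by linarith
  have h4 : (1 + s / 8) ^ 4 ≥ 1.2 * s + 1 := by
    nlinarith [mul_nonneg hsn hsn, mul_nonneg (mul_nonneg hsn hsn) hsn,
      mul_nonneg (mul_nonneg hsn hsn) (mul_nonneg hsn hsn),
      mul_nonneg (show (0:ℝ) ≤ s - 8.42 by linarith) hsn]
  have h40 : (0:ℝ) ≤ 1.2 * s + 1 := by nlinarith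
  have h8' : (1.2 * s + 1) ^ 2 ≤ (1 + s / 8) ^ 8 := by
    have he : (1 + s / 8) ^ 8 = ((1 + s / 8) ^ 4) ^ 2 := by ring
    rw [he]
    nlinarith
  rw [h8]
  calc (1.2 * s + 1) ^ 2 ≤ (1 + s / 8) ^ 8 := h8'
  _ ≤ Real.exp (s / 8) ^ 8 := pow_le_pow_left₀ hpos hb 8

lemma exp_key {u : ℝ} (hu : 3.31 ≤ u) :
    9.48 * u ^ 2 < Real.exp (2.7724 * u - 0.75) := by
  have hs0 : (8.42:ℝ) ≤ 2.7724 * u - 0.75 := by nlinarith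
  have h1 := exp_key' hs0
  have hfin : 9.48 * u ^ 2 < (1.2 * (2.7724 * u - 0.75) + 1) ^ 2 := by nlinarith
  linarith

set_option maxHeartbeats 1000000 in
lemma Dc_pos {u : ℝ} (hu : 3.31 ≤ u) : 0 < Dc u := by
  have hl2l : (0.6931:ℝ) < Real.log 2 := by linarith [Real.log_two_gt_d9]
  have hl2u : Real.log 2 < 0.6932 := by linarith [Real.log_two_lt_d9]
  have hL1 := Lc_lb
  have hL2 := Lc_ub
  have hu0 : (0:ℝ) < u := by linarith
  have hu2 : (10.95:ℝ) ≤ u ^ 2 := by nlinarith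
  have hd1 : (0:ℝ) < 4 * u - 1 := by linarith
  -- bound E1 from below
  have hdiv : 4 * Lc / u ≤ 0.75 := by
    rw [div_le_iff₀ hu0]; nlinarith
  have hE1 : (0.25:ℝ) ≤ Real.exp (-(4 * Lc) / u) := by
    have harg : (-0.75 : ℝ) ≤ -(4 * Lc) / u := by
      rw [neg_div]; linarith
    calc (0.25:ℝ) = 1 + (-0.75) := by norm_num
    _ ≤ Real.exp (-0.75) := by have := Real.add_one_le_exp (-0.75:ℝ); linarith
    _ ≤ Real.exp (-(4 * Lc) / u) := Real.exp_le_exp.mpr harg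
  -- bound E2 from above
  have hE2 : Real.exp (4 * Lc / u - 4 * Real.log 2 * u) ≤ Real.exp (0.75 - 2.7724 * u) := by
    apply Real.exp_le_exp.mpr
    nlinarith
  have hR : (0:ℝ) < (4 * u + 1) / (4 * u - 1) := div_pos (by linarith) hd1
  have hR2 : (4 * u + 1) / (4 * u - 1) ≤ 1.17 := by
    rw [div_le_iff₀ hd1]; nlinarith
  -- bracket bound
  have hq1 : 4 * Lc / u ^ 2 ≤ 0.227 := by
    rw [div_le_iff₀ (by positivity)]; nlinarith
  have hq2 : (0:ℝ) ≤ 4 * Lc / u ^ 2 := le_of_lt (div_pos (by linarith) (by positivity))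
  have hq3 : 8 / (4 * u - 1) ^ 2 ≤ 0.054 := by
    rw [div_le_iff₀ (by positivity)]; nlinarith
  have hq4 : (0:ℝ) ≤ 8 / (4 * u - 1) ^ 2 := by positivity
  have hQ : (4 * Lc / u ^ 2 + 4 * Real.log 2) * ((4 * u + 1) / (4 * u - 1))
      + 8 / (4 * u - 1) ^ 2 ≤ 3.6 := by
    nlinarith
  have hQ0 : (0:ℝ) ≤ (4 * Lc / u ^ 2 + 4 * Real.log 2) * ((4 * u + 1) / (4 * u - 1))
      + 8 / (4 * u - 1) ^ 2 := by
    have : (0:ℝ) ≤ (4 * Lc / u ^ 2 + 4 * Real.log 2) := by linarith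
    nlinarith
  -- final comparison
  have hkey := exp_key hu
  have hE2' : 9.48 * (Real.exp (0.75 - 2.7724 * u) * u ^ 2) < 1 := by
    have h1 : Real.exp (0.75 - 2.7724 * u) * Real.exp (2.7724 * u - 0.75) = 1 := by
      rw [← Real.exp_add]; norm_num
    have h2 : (0:ℝ) < Real.exp (0.75 - 2.7724 * u) := Real.exp_pos _
    have h3 := mul_lt_mul_of_pos_left hkey h2
    rw [h1] at h3
    have h5 : Real.exp (0.75 - 2.7724 * u) * (9.48 * u ^ 2)
        = 9.48 * (Real.exp (0.75 - 2.7724 * u) * u ^ 2) := by ring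
    rw [h5] at h3
    exact h3
  have hneg : Real.exp (4 * Lc / u - 4 * Real.log 2 * u) *
      ((4 * Lc / u ^ 2 + 4 * Real.log 2) * ((4 * u + 1) / (4 * u - 1)) + 8 / (4 * u - 1) ^ 2)
      ≤ Real.exp (0.75 - 2.7724 * u) * 3.6 :=
    calc Real.exp (4 * Lc / u - 4 * Real.log 2 * u) *
        ((4 * Lc / u ^ 2 + 4 * Real.log 2) * ((4 * u + 1) / (4 * u - 1)) + 8 / (4 * u - 1) ^ 2)
        ≤ Real.exp (0.75 - 2.7724 * u) *
        ((4 * Lc / u ^ 2 + 4 * Real.log 2) * ((4 * u + 1) / (4 * u - 1)) + 8 / (4 * u - 1) ^ 2) :=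
          mul_le_mul_of_nonneg_right hE2 hQ0
      _ ≤ Real.exp (0.75 - 2.7724 * u) * 3.6 :=
          mul_le_mul_of_nonneg_left hQ (Real.exp_pos _).le
  have hposP : (0.38:ℝ) / u ^ 2 ≤ Real.exp (-(4 * Lc) / u) * (4 * Lc / u ^ 2) := by
    rw [div_le_iff₀ (by positivity)]
    have h3 : Real.exp (-(4 * Lc) / u) * (4 * Lc / u ^ 2) * u ^ 2
        = Real.exp (-(4 * Lc) / u) * (4 * Lc) := by field_simp
    rw [h3]; nlinarith
  have hsmall : Real.exp (0.75 - 2.7724 * u) * 3.6 < 0.38 / u ^ 2 := by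
    rw [lt_div_iff₀ (by positivity)]
    have h4 : Real.exp (0.75 - 2.7724 * u) * 3.6 * u ^ 2
        = 3.6 * (Real.exp (0.75 - 2.7724 * u) * u ^ 2) := by ring
    rw [h4]; linarith
  unfold Dc
  have hrw : Real.exp (4 * Lc / u - 4 * Real.log 2 * u) * (-(4 * Lc) / u ^ 2 - 4 * Real.log 2) *
        ((4 * u + 1) / (4 * u - 1)) +
      Real.exp (4 * Lc / u - 4 * Real.log 2 * u) * (-8 / (4 * u - 1) ^ 2)
      = -(Real.exp (4 * Lc / u - 4 * Real.log 2 * u) *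
        ((4 * Lc / u ^ 2 + 4 * Real.log 2) * ((4 * u + 1) / (4 * u - 1)) + 8 / (4 * u - 1) ^ 2)) := by
    ring
  rw [hrw]
  linarith

lemma Fc_strictMono : StrictMonoOn Fc (Set.Ici (3.31:ℝ)) := by
  apply strictMonoOn_of_deriv_pos (convex_Ici _)
  · intro u hu
    have hu' : (3:ℝ) ≤ u := le_trans (by norm_num) hu
    exact (Fc_hasDerivAt hu').differentiableAt.continuousAt.continuousWithinAt
  · intro u hu
    rw [interior_Ici] at hu
    have hu' : (3.31:ℝ) ≤ u := le_of_lt hu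
    rw [(Fc_hasDerivAt (by linarith : (3:ℝ) ≤ u)).deriv]
    exact Dc_pos hu'

lemma Fc_tendsto : Tendsto Fc atTop (nhds 1) := by
  have t1 : Tendsto (fun u : ℝ => -(4 * Lc) / u) atTop (nhds 0) :=
    tendsto_const_nhds.div_atTop tendsto_id
  have t1' : Tendsto (fun u : ℝ => Real.exp (-(4 * Lc) / u)) atTop (nhds 1) := by
    have := (Real.continuous_exp.tendsto 0).comp t1
    simpa [Function.comp_def] using this
  have t2a : Tendsto (fun u : ℝ => 4 * Lc / u) atTop (nhds 0) :=
    tendsto_const_nhds.div_atTop tendsto_id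
  have t2b : Tendsto (fun u : ℝ => -(4 * Real.log 2 * u)) atTop atBot := by
    apply tendsto_neg_atTop_atBot.comp
    apply Tendsto.const_mul_atTop (by positivity : (0:ℝ) < 4 * Real.log 2) tendsto_id
  have t2 : Tendsto (fun u : ℝ => 4 * Lc / u - 4 * Real.log 2 * u) atTop atBot := by
    apply tendsto_atBot_mono' atTop _ (tendsto_atBot_add_const_right atTop 1 t2b)
    filter_upwards [Filter.eventually_ge_atTop (3:ℝ)] with u hu
    have h1 : 4 * Lc / u ≤ 1 := by
      rw [div_le_one (by linarith)]
      nlinarith [Lc_ub]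
    have h2 : (4:ℝ) * Lc / u - 4 * Real.log 2 * u ≤ -(4 * Real.log 2 * u) + 1 := by linarith
    exact h2
  have t2' : Tendsto (fun u : ℝ => Real.exp (4 * Lc / u - 4 * Real.log 2 * u)) atTop (nhds 0) :=
    Real.tendsto_exp_atBot.comp t2
  have t3 : Tendsto (fun u : ℝ => (4 * u + 1) / (4 * u - 1)) atTop (nhds 1) := by
    have hden : Tendsto (fun u : ℝ => 4 * u - 1) atTop atTop := by
      apply Filter.tendsto_atTop_add_const_right
      exact Tendsto.const_mul_atTop (by norm_num) tendsto_id
    have hfrac : Tendsto (fun u : ℝ => 2 / (4 * u - 1)) atTop (nhds 0) :=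
      tendsto_const_nhds.div_atTop hden
    have heq : ∀ᶠ u : ℝ in atTop, 1 + 2 / (4 * u - 1) = (4 * u + 1) / (4 * u - 1) := by
      filter_upwards [Filter.eventually_ge_atTop (1:ℝ)] with u hu
      have hne : (4 * u - 1) ≠ 0 := by linarith
      field_simp
      ring
    have := (tendsto_const_nhds.add hfrac).congr' heq
    simpa using this
  have := t1'.add (t2'.mul t3)
  simp at this
  exact this

lemma sqrt_ge {x : ℝ} (hx : 11 ≤ x) : (3.31:ℝ) ≤ Real.sqrt x := by
  nlinarith [Real.sq_sqrt (show (0:ℝ) ≤ x by linarith), Real.sqrt_nonneg x]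

lemma h_eq {x : ℝ} (hx : 1 ≤ x) :
    ((1 + Real.sqrt 5) / 2) ^ (-(4 / Real.sqrt x)) +
      ((1 + Real.sqrt 5) / 2 / (2 : ℝ) ^ x) ^ (4 / Real.sqrt x) *
        (1 + 2 / (4 * Real.sqrt x - 1)) = Fc (Real.sqrt x) := by
  have hx0 : (0:ℝ) ≤ x := by linarith
  have hs1 : (1:ℝ) ≤ Real.sqrt x := by
    nlinarith [Real.sq_sqrt hx0, Real.sqrt_nonneg x]
  have hs0 : Real.sqrt x ≠ 0 := by linarith
  have hsq : Real.sqrt x ^ 2 = x := Real.sq_sqrt hx0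
  have h2x : (0:ℝ) < (2:ℝ) ^ x := Real.rpow_pos_of_pos (by norm_num) x
  have hlam : (0:ℝ) < (1 + Real.sqrt 5) / 2 := lam_pos
  have e1 : ((1 + Real.sqrt 5) / 2) ^ (-(4 / Real.sqrt x))
      = Real.exp (-(4 * Lc) / Real.sqrt x) := by
    rw [Real.rpow_def_of_pos hlam]
    congr 1
    unfold Lc
    ring
  have e2 : ((1 + Real.sqrt 5) / 2 / (2 : ℝ) ^ x) ^ (4 / Real.sqrt x)
      = Real.exp (4 * Lc / Real.sqrt x - 4 * Real.log 2 * Real.sqrt x) := by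
    rw [Real.rpow_def_of_pos (by positivity)]
    congr 1
    rw [Real.log_div (by positivity) (by positivity), Real.log_rpow (by norm_num)]
    rw [show (Real.log ((1 + Real.sqrt 5) / 2) - x * Real.log 2) * (4 / Real.sqrt x)
        = 4 * Lc / Real.sqrt x - 4 * Real.log 2 * (x / Real.sqrt x) by unfold Lc; ring]
    rw [Real.div_sqrt]
  have e3 : 1 + 2 / (4 * Real.sqrt x - 1)
      = (4 * Real.sqrt x + 1) / (4 * Real.sqrt x - 1) := by
    have hne : 4 * Real.sqrt x - 1 ≠ 0 := by linarith
    field_simp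
    ring
  rw [e1, e2, e3]
  rfl

theorem stmt_17 :
    let lam : ℝ := (1 + Real.sqrt 5) / 2
    let h : ℝ → ℝ := fun x =>
      lam ^ (-(4 / Real.sqrt x)) +
        (lam / (2 : ℝ) ^ x) ^ (4 / Real.sqrt x) * (1 + 2 / (4 * Real.sqrt x - 1))
    StrictMonoOn h (Set.Ici (11:ℝ)) ∧
      Filter.Tendsto h Filter.atTop (nhds 1) ∧
      ∀ x : ℝ, 11 ≤ x → h x < 1 := by
  intro lam h
  have heq : ∀ x : ℝ, 1 ≤ x → h x = Fc (Real.sqrt x) := fun x hx => h_eq hx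
  have hsqt : Tendsto Real.sqrt atTop atTop := by
    apply tendsto_atTop_atTop.mpr
    intro b
    refine ⟨(max b 0) ^ 2, fun a ha => ?_⟩
    have h1 : b ≤ max b 0 := le_max_left _ _
    have h2 := Real.sqrt_le_sqrt ha
    rw [Real.sqrt_sq (le_max_right b 0)] at h2
    exact le_trans h1 h2
  have hFle : ∀ v : ℝ, 3.31 ≤ v → Fc v ≤ 1 := by
    intro v hv
    apply ge_of_tendsto Fc_tendsto
    filter_upwards [Filter.eventually_ge_atTop v, Filter.eventually_ge_atTop (3.31:ℝ)]
      with u h1 h2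
    exact Fc_strictMono.monotoneOn hv (by exact h2) h1
  refine ⟨?_, ?_, ?_⟩
  · intro x hx y hy hxy
    simp only [Set.mem_Ici] at hx hy
    rw [heq x (by linarith), heq y (by linarith)]
    exact Fc_strictMono (sqrt_ge hx) (sqrt_ge hy)
      (Real.sqrt_lt_sqrt (by linarith) hxy)
  · apply (Fc_tendsto.comp hsqt).congr'
    filter_upwards [Filter.eventually_ge_atTop (1:ℝ)] with x hx
    exact (heq x hx).symm
  · intro x hx
    rw [heq x (by linarith)]
    have m1 : Real.sqrt x ∈ Set.Ici (3.31:ℝ) := sqrt_ge hx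
    have m2 : Real.sqrt x + 1 ∈ Set.Ici (3.31:ℝ) := by
      simp only [Set.mem_Ici] at m1 ⊢; linarith
    calc Fc (Real.sqrt x) < Fc (Real.sqrt x + 1) :=
        Fc_strictMono m1 m2 (by linarith)
      _ ≤ 1 := hFle _ (by simpa using m2)
end
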